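/- arXiv:2106.07319 — 6 statements merged into one kernel-verified Lean document; each statement's English description precedes it below -/
import Mathlib

section
/- Let (X, dist) be a metric space, let m ≥ 1 be an integer and ε ∈ (0,1] a real number, let k ≥ 1 and let c : Fin k → X be a set of k centers. Let p, q : Fin n → X be two families of n points (the indexing encodes a bijection π between the two point sets) such that Σ_{t<n} dist(p t, q t)^m ≤ (ε/(2m))^m · cost_m(p, c). Then |cost_m(p, c) − cost_m(q, c)| ≤ ε · cost_m(p, c). -/
/-!
`clusterCost m p c ^ (1 / m)` is the `ℓ^m`-norm of the vector of distances from the points to their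
nearest centres. That distance is `1`-Lipschitz in the point, so by Minkowski's inequality the
`m`-th roots of the two costs differ by at most `(∑ t, dist (p t) (q t) ^ m) ^ (1 / m)`, which is
at most `δ = ε / (2m)` times the first root. Hence the cost ratio lies between `(1 - δ) ^ m` and
`(1 + δ) ^ m`, and both are within `ε` of `1`.
-/

/-- The `k`-clustering cost of points `p` with centers `c`:
`cost_m(p, c) = Σ_t (min_i dist (p t) (c i))^m`. -/
noncomputable def clusterCost {X : Type*} [MetricSpace X] {n k : ℕ} (m : ℕ)
    (p : Fin n → X) (c : Fin k → X) : ℝ :=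
  ∑ t, (⨅ i, dist (p t) (c i)) ^ m

open Finset

theorem Real.sum_add_pow_le_add_pow_of_sum_pow_le {ι : Type*} (s : Finset ι) {f g : ι → ℝ}
    {m : ℕ} (hm : 1 ≤ m) (hf : ∀ i ∈ s, 0 ≤ f i) (hg : ∀ i ∈ s, 0 ≤ g i) {A B : ℝ}
    (hA : 0 ≤ A) (hB : 0 ≤ B) (hfA : ∑ i ∈ s, f i ^ m ≤ A ^ m)
    (hgB : ∑ i ∈ s, g i ^ m ≤ B ^ m) :
    ∑ i ∈ s, (f i + g i) ^ m ≤ (A + B) ^ m := by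
  have hm0 : m ≠ 0 := by omega
  have root_le {F : ι → ℝ} {C : ℝ} (hF : ∀ i ∈ s, 0 ≤ F i) (hC : 0 ≤ C)
      (hFC : ∑ i ∈ s, F i ^ m ≤ C ^ m) : (∑ i ∈ s, F i ^ (m : ℝ)) ^ (1 / (m : ℝ)) ≤ C := by
    simp only [Real.rpow_natCast, one_div]
    calc (∑ i ∈ s, F i ^ m) ^ (m : ℝ)⁻¹ ≤ (C ^ m) ^ (m : ℝ)⁻¹ := by
          gcongr
          exact sum_nonneg fun i hi => pow_nonneg (hF i hi) m
      _ = C := Real.pow_rpow_inv_natCast hC hm0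
  have hfg := Real.Lp_add_le_of_nonneg (p := m) s (by exact_mod_cast hm) hf hg
  have hsum : 0 ≤ ∑ i ∈ s, (f i + g i) ^ m :=
    sum_nonneg fun i hi => pow_nonneg (add_nonneg (hf i hi) (hg i hi)) m
  calc ∑ i ∈ s, (f i + g i) ^ m
      = ((∑ i ∈ s, (f i + g i) ^ (m : ℝ)) ^ (1 / (m : ℝ))) ^ m := by
        simp only [Real.rpow_natCast, one_div, Real.rpow_inv_natCast_pow hsum hm0]
    _ ≤ (A + B) ^ m := by
        gcongr
        · exact Real.rpow_nonneg (sum_nonneg fun i hi => Real.rpow_nonneg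
            (add_nonneg (hf i hi) (hg i hi)) _) _
        · exact hfg.trans (add_le_add (root_le hf hA hfA) (root_le hg hB hgB))

theorem iInf_dist_le_iInf_dist_add_dist {X ι : Type*} [PseudoMetricSpace X] (c : ι → X)
    (x y : X) : ⨅ i, dist x (c i) ≤ (⨅ i, dist y (c i)) + dist x y := by
  rcases isEmpty_or_nonempty ι with hι | hι
  · simp [Real.iInf_of_isEmpty]
  · have hbdd : BddBelow (Set.range fun i => dist y (c i)) :=
      ⟨0, by rintro _ ⟨i, rfl⟩; exact dist_nonneg⟩
    rw [ciInf_add hbdd]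
    exact ciInf_mono ⟨0, by rintro _ ⟨i, rfl⟩; exact dist_nonneg⟩
      fun i => (dist_triangle x y (c i)).trans_eq (add_comm _ _)

theorem one_add_div_two_mul_pow_le {ε : ℝ} (h0 : 0 ≤ ε) (h1 : ε ≤ 1) (m : ℕ) :
    (1 + ε / (2 * m)) ^ m ≤ 1 + ε :=
  calc (1 + ε / (2 * m)) ^ m = (1 - (-(ε / 2)) / m) ^ m := by ring
    _ ≤ Real.exp (ε / 2) := by
        simpa using Real.one_sub_div_pow_le_exp_neg (n := m) (t := -(ε / 2))
          (by linarith [m.cast_nonneg (α := ℝ)])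
    _ ≤ 1 / (1 - ε / 2) := Real.exp_bound_div_one_sub_of_interval (by positivity) (by linarith)
    _ ≤ 1 + ε := by
        rw [div_le_iff₀ (by linarith)]
        nlinarith

theorem one_sub_le_one_sub_div_two_mul_pow {ε : ℝ} (h0 : 0 ≤ ε) (h1 : ε ≤ 1) (m : ℕ) :
    1 - ε ≤ (1 - ε / (2 * m)) ^ m := by
  rcases m.eq_zero_or_pos with rfl | hm
  · simpa using h0
  have hδ : ε / (2 * m) ≤ 1 :=
    div_le_one_of_le₀ (by linarith [(Nat.one_le_cast (α := ℝ)).2 hm]) (by positivity)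
  calc 1 - ε ≤ 1 + m * -(ε / (2 * m)) := by
        field_simp
        linarith
    _ ≤ (1 - ε / (2 * m)) ^ m := (one_add_mul_le_pow (by linarith) m).trans_eq (by ring)

section clusterCost

variable {X : Type*} [MetricSpace X] {n k m : ℕ} (c : Fin k → X)

theorem clusterCost_nonneg (p : Fin n → X) : 0 ≤ clusterCost m p c :=
  sum_nonneg fun _ _ => pow_nonneg (Real.iInf_nonneg fun _ => dist_nonneg) m

theorem clusterCost_le_add_pow (hm : 1 ≤ m) {p q : Fin n → X} {A B : ℝ} (hA : 0 ≤ A)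
    (hB : 0 ≤ B) (hp : clusterCost m p c ≤ A ^ m)
    (hpq : ∑ t, dist (p t) (q t) ^ m ≤ B ^ m) : clusterCost m q c ≤ (A + B) ^ m :=
  calc clusterCost m q c ≤ ∑ t, ((⨅ i, dist (p t) (c i)) + dist (p t) (q t)) ^ m := by
        refine sum_le_sum fun t _ => pow_le_pow_left₀ (Real.iInf_nonneg fun _ => dist_nonneg) ?_ m
        rw [dist_comm]
        exact iInf_dist_le_iInf_dist_add_dist c _ _
    _ ≤ (A + B) ^ m := Real.sum_add_pow_le_add_pow_of_sum_pow_le _ hm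
        (fun _ _ => Real.iInf_nonneg fun _ => dist_nonneg) (fun _ _ => dist_nonneg) hA hB hp hpq

variable {p q : Fin n → X} {δ : ℝ}

theorem clusterCost_le_one_add_pow_mul (hm : 1 ≤ m) (hδ : 0 ≤ δ)
    (hpq : ∑ t, dist (p t) (q t) ^ m ≤ δ ^ m * clusterCost m p c) :
    clusterCost m q c ≤ (1 + δ) ^ m * clusterCost m p c := by
  set u := clusterCost m p c ^ (m : ℝ)⁻¹
  have hu0 : 0 ≤ u := Real.rpow_nonneg (clusterCost_nonneg c p) _
  have hu : u ^ m = clusterCost m p c :=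
    Real.rpow_inv_natCast_pow (clusterCost_nonneg c p) (by omega)
  rw [← hu, ← mul_pow, add_mul, one_mul]
  exact clusterCost_le_add_pow c hm hu0 (mul_nonneg hδ hu0) hu.ge (by rwa [mul_pow, hu])

theorem one_sub_pow_mul_le_clusterCost (hm : 1 ≤ m) (hδ : 0 ≤ δ) (hδ1 : δ ≤ 1)
    (hpq : ∑ t, dist (p t) (q t) ^ m ≤ δ ^ m * clusterCost m p c) :
    (1 - δ) ^ m * clusterCost m p c ≤ clusterCost m q c := by
  set u := clusterCost m p c ^ (m : ℝ)⁻¹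
  set v := clusterCost m q c ^ (m : ℝ)⁻¹
  have hu0 : 0 ≤ u := Real.rpow_nonneg (clusterCost_nonneg c p) _
  have hv0 : 0 ≤ v := Real.rpow_nonneg (clusterCost_nonneg c q) _
  have hu : u ^ m = clusterCost m p c :=
    Real.rpow_inv_natCast_pow (clusterCost_nonneg c p) (by omega)
  have hv : v ^ m = clusterCost m q c :=
    Real.rpow_inv_natCast_pow (clusterCost_nonneg c q) (by omega)
  have hqp : ∑ t, dist (q t) (p t) ^ m ≤ (δ * u) ^ m := by
    simpa only [dist_comm, mul_pow, hu] using hpq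
  have hle : u ≤ v + δ * u := le_of_pow_le_pow_left₀ (by omega) (by positivity)
    (hu ▸ clusterCost_le_add_pow c hm hv0 (mul_nonneg hδ hu0) hv.ge hqp)
  rw [← hu, ← hv, ← mul_pow]
  exact pow_le_pow_left₀ (mul_nonneg (by linarith) hu0) (by linarith) m

end clusterCost

theorem movement_preserves_cost_general {X : Type*} [MetricSpace X] {n k m : ℕ}
    (hm : 1 ≤ m) {ε : ℝ} (hε : ε ∈ Set.Ioc (0 : ℝ) 1)
    (c : Fin k → X) (p q : Fin n → X)
    (hmove : ∑ t, dist (p t) (q t) ^ m ≤ (ε / (2 * m)) ^ m * clusterCost m p c) :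
    |clusterCost m p c - clusterCost m q c| ≤ ε * clusterCost m p c := by
  obtain ⟨hε0, hε1⟩ := hε
  have hδ0 : 0 ≤ ε / (2 * m) := by positivity
  have hδ1 : ε / (2 * m) ≤ 1 :=
    div_le_one_of_le₀ (by linarith [(Nat.one_le_cast (α := ℝ)).2 hm]) (by positivity)
  have upper := clusterCost_le_one_add_pow_mul c hm hδ0 hmove
  have lower := one_sub_pow_mul_le_clusterCost c hm hδ0 hδ1 hmove
  have h_one_add := one_add_div_two_mul_pow_le hε0.le hε1 m
  have h_one_sub := one_sub_le_one_sub_div_two_mul_pow hε0.le hε1 m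
  have hcost := clusterCost_nonneg (m := m) c p
  rw [abs_sub_le_iff]
  constructor <;> nlinarith

theorem movement_preserves_cost {X : Type*} [MetricSpace X] {n k m : ℕ}
    (hm : 1 ≤ m) (hk : 1 ≤ k) {ε : ℝ} (hε : ε ∈ Set.Ioc (0 : ℝ) 1)
    (c : Fin k → X) (p q : Fin n → X)
    (hmove : ∑ t, dist (p t) (q t) ^ m ≤ (ε / (2 * m)) ^ m * clusterCost m p c) :
    |clusterCost m p c - clusterCost m q c| ≤ ε * clusterCost m p c :=
  movement_preserves_cost_general hm hε c p q hmove
end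

section
/- Let (X, dist) be a metric space, let m ≥ 1 and k ≥ 1 be integers, let ε ∈ (0,1], and let n ≥ 1. Let p, q : Fin n → X be two families of n points such that Σ_{t<n} dist(p t, q t)^m ≤ (ε/(2m))^m · opt, where opt = ⨅ over all c' : Fin k → X of cost_m(p, c') is the optimal unconstrained k-clustering cost of p. Then for every c : Fin k → X it holds that |cost_m(p, c) − cost_m(q, c)| ≤ ε · cost_m(p, c); i.e., q (with multiplicities interpreted as integer weights) is a (k, ε)-coreset for p. -/
lemma bern_aux (t : ℝ) (ht : 0 ≤ t) : ∀ M : ℕ, (M:ℝ) * t < 1 → (1+t)^M * (1 - M*t) ≤ 1 := by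
  intro M
  induction M with
  | zero => simp
  | succ M ih =>
    intro h
    have hM : (M:ℝ) * t < 1 := by push_cast at h ⊢; nlinarith
    have h1 := ih hM
    have h2 : (0:ℝ) ≤ (1+t)^M := by positivity
    have hM0 : (0:ℝ) ≤ (M:ℝ) := Nat.cast_nonneg M
    have h3 : (1+t) * (1 - ((M:ℝ)+1)*t) ≤ 1 - (M:ℝ)*t := by nlinarith [mul_nonneg ht ht, mul_nonneg hM0 (mul_nonneg ht ht)]
    push_cast
    calc (1+t)^(M+1) * (1 - ((M:ℝ)+1)*t) = (1+t)^M * ((1+t) * (1 - ((M:ℝ)+1)*t)) := by ring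
      _ ≤ (1+t)^M * (1 - (M:ℝ)*t) := mul_le_mul_of_nonneg_left h3 h2
      _ ≤ 1 := h1

lemma holder_aux (M : ℕ) {t x y : ℝ} (ht : 0 < t) (hx : 0 ≤ x) (hy : 0 ≤ y) :
    (x + y) ^ (M+1) ≤ (1+t)^M * x^(M+1) + ((1+t)/t)^M * y^(M+1) := by
  have h1t : (0:ℝ) < 1 + t := by linarith
  have hw1 : (0:ℝ) ≤ 1/(1+t) := (div_pos one_pos h1t).le
  have hw2 : (0:ℝ) ≤ t/(1+t) := (div_pos ht h1t).le
  have hab : 1/(1+t) + t/(1+t) = 1 := by field_simp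
  have key := (convexOn_pow (M+1)).2 (Set.mem_Ici.2 hx)
      (Set.mem_Ici.2 (div_nonneg hy ht.le)) hw1 hw2 hab
  simp only [smul_eq_mul] at key
  have hxy : 1/(1+t) * x + t/(1+t) * (y/t) = (x+y)/(1+t) := by field_simp
  rw [hxy, div_pow, div_le_iff₀ (by positivity)] at key
  calc (x+y)^(M+1) ≤ (1/(1+t) * x^(M+1) + t/(1+t) * (y/t)^(M+1)) * (1+t)^(M+1) := key
    _ = (1+t)^M * x^(M+1) + ((1+t)/t)^M * y^(M+1) := by
        rw [div_pow, div_pow]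
        field_simp
        ring

theorem movementBased_coreset_is_coreset {X : Type*} [MetricSpace X] {n k m : ℕ}
    (hm : 1 ≤ m) (hk : 1 ≤ k) (hn : 1 ≤ n) {ε : ℝ} (hε : ε ∈ Set.Ioc (0 : ℝ) 1)
    (p q : Fin n → X)
    (hmove : ∑ t, dist (p t) (q t) ^ m ≤
      (ε / (2 * m)) ^ m * ⨅ c' : Fin k → X, clusterCost m p c') :
    ∀ c : Fin k → X,
      |clusterCost m p c - clusterCost m q c| ≤ ε * clusterCost m p c := by
  obtain ⟨M, rfl⟩ : ∃ M, m = M + 1 := ⟨m - 1, (Nat.succ_pred_eq_of_pos hm).symm⟩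
  obtain ⟨hε0, hε1⟩ := hε
  have hX : Nonempty X := ⟨p ⟨0, hn⟩⟩
  intro c
  haveI : Nonempty (Fin k) := ⟨⟨0, hk⟩⟩
  -- notation
  set P : ℕ := M + 1 with hP
  set t : ℝ := ε / (2 * P) with ht_def
  have hPpos : (0:ℝ) < (P:ℝ) := by positivity
  have ht : 0 < t := by
    apply div_pos hε0; positivity
  have h1t : (0:ℝ) < 1 + t := by linarith
  have htP : (P:ℝ) * t = ε / 2 := by
    rw [ht_def]; field_simp
  -- per-point quantities
  set a : Fin n → ℝ := fun s => ⨅ i, dist (p s) (c i) with ha_def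
  set e : Fin n → ℝ := fun s => ⨅ i, dist (q s) (c i) with he_def
  set d : Fin n → ℝ := fun s => dist (p s) (q s) with hd_def
  have bddA : ∀ s, BddBelow (Set.range fun i => dist (p s) (c i)) :=
    fun s => (Set.finite_range _).bddBelow
  have bddE : ∀ s, BddBelow (Set.range fun i => dist (q s) (c i)) :=
    fun s => (Set.finite_range _).bddBelow
  have ha0 : ∀ s, 0 ≤ a s := fun s => le_ciInf fun i => dist_nonneg
  have he0 : ∀ s, 0 ≤ e s := fun s => le_ciInf fun i => dist_nonneg
  have hd0 : ∀ s, 0 ≤ d s := fun s => dist_nonneg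
  have hea : ∀ s, e s ≤ a s + d s := by
    intro s
    have h1 : e s - d s ≤ a s := by
      apply le_ciInf
      intro i
      have h2 : e s ≤ dist (q s) (c i) := ciInf_le (bddE s) i
      have h3 := dist_triangle (q s) (p s) (c i)
      have h4 : dist (q s) (p s) = d s := dist_comm (q s) (p s)
      linarith
    linarith
  have hae : ∀ s, a s ≤ e s + d s := by
    intro s
    have h1 : a s - d s ≤ e s := by
      apply le_ciInf
      intro i
      have h2 : a s ≤ dist (p s) (c i) := ciInf_le (bddA s) i
      have h3 := dist_triangle (p s) (q s) (c i)
      linarith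
    linarith
  -- sums
  set A : ℝ := clusterCost P p c with hA_def
  set E : ℝ := clusterCost P q c with hE_def
  set D : ℝ := ∑ s, d s ^ P with hD_def
  have hAsum : A = ∑ s, a s ^ P := rfl
  have hEsum : E = ∑ s, e s ^ P := rfl
  have hA0 : 0 ≤ A := Finset.sum_nonneg fun s _ => pow_nonneg (ha0 s) P
  have hE0 : 0 ≤ E := Finset.sum_nonneg fun s _ => pow_nonneg (he0 s) P
  -- opt ≤ A
  have hoptA : (⨅ c' : Fin k → X, clusterCost P p c') ≤ A := by
    apply ciInf_le _ c
    refine ⟨0, ?_⟩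
    rintro x ⟨c', rfl⟩
    exact Finset.sum_nonneg fun s _ => pow_nonneg (le_ciInf fun i => dist_nonneg) P
  -- movement bound
  have hD : D ≤ t ^ P * A := by
    calc D ≤ t ^ P * ⨅ c' : Fin k → X, clusterCost P p c' := hmove
      _ ≤ t ^ P * A := mul_le_mul_of_nonneg_left hoptA (by positivity)
  -- key coefficient identity
  have hcoef : ((1+t)/t)^M * (t ^ P) = (1+t)^M * t := by
    rw [div_pow, hP, pow_succ]
    field_simp
  -- upper bound : E ≤ (1+t)^P * A
  have hupper : E ≤ (1+t)^P * A := by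
    have step1 : E ≤ ∑ s, (a s + d s) ^ P :=
      Finset.sum_le_sum fun s _ => pow_le_pow_left₀ (he0 s) (hea s) P
    have step2 : ∑ s, (a s + d s) ^ P ≤ (1+t)^M * A + ((1+t)/t)^M * D := by
      rw [hAsum, hD_def, Finset.mul_sum, Finset.mul_sum, ← Finset.sum_add_distrib]
      exact Finset.sum_le_sum fun s _ => holder_aux M ht (ha0 s) (hd0 s)
    have step3 : ((1+t)/t)^M * D ≤ (1+t)^M * t * A := by
      calc ((1+t)/t)^M * D ≤ ((1+t)/t)^M * (t ^ P * A) :=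
            mul_le_mul_of_nonneg_left hD (by positivity)
        _ = (1+t)^M * t * A := by rw [← mul_assoc, hcoef]
    calc E ≤ (1+t)^M * A + ((1+t)/t)^M * D := step1.trans step2
      _ ≤ (1+t)^M * A + (1+t)^M * t * A := by linarith
      _ = (1+t)^P * A := by rw [hP, pow_succ]; ring
  -- lower bound : A ≤ (1+t)^M * E + (1+t)^M * t * A
  have hlower : A ≤ (1+t)^M * E + (1+t)^M * t * A := by
    have step1 : A ≤ ∑ s, (e s + d s) ^ P := by
      rw [hAsum]
      exact Finset.sum_le_sum fun s _ => pow_le_pow_left₀ (ha0 s) (hae s) P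
    have step2 : ∑ s, (e s + d s) ^ P ≤ (1+t)^M * E + ((1+t)/t)^M * D := by
      rw [hEsum, hD_def, Finset.mul_sum, Finset.mul_sum, ← Finset.sum_add_distrib]
      exact Finset.sum_le_sum fun s _ => holder_aux M ht (he0 s) (hd0 s)
    have step3 : ((1+t)/t)^M * D ≤ (1+t)^M * t * A := by
      calc ((1+t)/t)^M * D ≤ ((1+t)/t)^M * (t ^ P * A) :=
            mul_le_mul_of_nonneg_left hD (by positivity)
        _ = (1+t)^M * t * A := by rw [← mul_assoc, hcoef]
    linarith
  -- numeric facts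
  have hMt : (M:ℝ) * t < 1 := by
    have : (M:ℝ) * t ≤ (P:ℝ) * t := by
      apply mul_le_mul_of_nonneg_right _ ht.le
      push_cast [hP]; linarith
    rw [htP] at this; linarith
  have hPt : (P:ℝ) * t < 1 := by rw [htP]; linarith
  have hbernP : (1+t)^P * (1 - (P:ℝ)*t) ≤ 1 := bern_aux t ht.le P hPt
  have hbernM : (1+t)^M * (1 - (M:ℝ)*t) ≤ 1 := bern_aux t ht.le M hMt
  -- E ≤ (1+ε) A
  have hEup : E ≤ (1+ε) * A := by
    have h1 : (1+t)^P ≤ 1 + ε := by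
      rw [htP] at hbernP
      have h2 : (0:ℝ) < 1 - ε/2 := by linarith
      have h3 : (1+t)^P ≤ 1 / (1 - ε/2) := by
        rw [le_div_iff₀ h2]; linarith
      have h4 : 1 / (1 - ε/2) ≤ 1 + ε := by
        rw [div_le_iff₀ h2]; nlinarith
      linarith
    calc E ≤ (1+t)^P * A := hupper
      _ ≤ (1+ε) * A := mul_le_mul_of_nonneg_right h1 hA0
  -- (1-ε) A ≤ E
  have hElow : (1-ε) * A ≤ E := by
    have hMpow : (0:ℝ) < (1+t)^M := by positivity
    -- (1-ε+t)*(1+t)^M ≤ 1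
    have hkey : (1 - ε + t) * (1+t)^M ≤ 1 := by
      have h5 : 1 - ε + t ≤ 1 - (M:ℝ)*t := by
        have : ((M:ℝ) + 1) * t = ε/2 := by
          rw [← htP]; push_cast [hP]; ring
        nlinarith
      have h6 : (1 - ε + t) * (1+t)^M ≤ (1 - (M:ℝ)*t) * (1+t)^M :=
        mul_le_mul_of_nonneg_right h5 hMpow.le
      linarith [hbernM]
    -- from hlower : A ≤ (1+t)^M * E + (1+t)^M * t * A
    -- want (1-ε)*A ≤ E, equivalently (1-ε)*(1+t)^M*A ≤ (1+t)^M*E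
    have h8 : (1 - ε + t) * (1+t)^M * A ≤ A :=
      calc (1 - ε + t) * (1+t)^M * A ≤ 1 * A :=
            mul_le_mul_of_nonneg_right hkey hA0
        _ = A := one_mul A
    have hfact : (1 - ε + t) * (1+t)^M * A - (1+t)^M * t * A = (1+t)^M * ((1-ε)*A) := by
      ring
    have h9 : (1+t)^M * ((1-ε)*A) ≤ (1+t)^M * E := by linarith
    exact le_of_mul_le_mul_left h9 hMpow
  rw [abs_le]
  have hr1 : (1+ε) * A = A + ε * A := by ring
  have hr2 : (1-ε) * A = A - ε * A := by ring
  constructor <;> linarith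
end

section
/- Let (X, dist) be a metric space, m ≥ 1 and k ≥ 1 integers, and ε ≥ 0. Let p₁, q₁ : Fin n₁ → X and p₂, q₂ : Fin n₂ → X be families of points such that for each j ∈ {1,2}, for every c : Fin k → X and every nonempty set 𝐊 of size vectors for n_j points and k clusters, |cost_{m,𝐊}(p_j, c) − cost_{m,𝐊}(q_j, c)| ≤ ε · cost_{m,𝐊}(p_j, c) (i.e., q_j is a (k, ε)-size coreset for p_j). Let p : Fin (n₁+n₂) → X and q : Fin (n₁+n₂) → X be the concatenations (Fin.append) of p₁, p₂ and of q₁, q₂, respectively. Then for every c : Fin k → X and every nonempty set 𝐊 of size vectors for n₁+n₂ points and k clusters, |cost_{m,𝐊}(p, c) − cost_{m,𝐊}(q, c)| ≤ ε · cost_{m,𝐊}(p, c); i.e., the merged set q is a (k, ε)-size coreset for p. -/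
/-- An assignment `α` satisfies the size vector `K` if each cluster `i`
gets exactly `K i` points. -/
def satisfiesSize {n k : ℕ} (α : Fin n → Fin k) (K : Fin k → ℕ) : Prop :=
  ∀ i, (Finset.univ.filter fun t => α t = i).card = K i

/-- The `K`-constrained clustering cost: minimum over assignments satisfying `K`. -/
noncomputable def sizeCost {X : Type*} [MetricSpace X] {n k : ℕ} (m : ℕ)
    (p : Fin n → X) (c : Fin k → X) (K : Fin k → ℕ) : ℝ :=
  sInf {x | ∃ α : Fin n → Fin k, satisfiesSize α K ∧
    x = ∑ t, dist (p t) (c (α t)) ^ m}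

/-- The cost under a size constraint, i.e. a set `Ks` of size vectors. -/
noncomputable def sizeConstraintCost {X : Type*} [MetricSpace X] {n k : ℕ} (m : ℕ)
    (p : Fin n → X) (c : Fin k → X) (Ks : Set (Fin k → ℕ)) : ℝ :=
  sInf {x | ∃ K ∈ Ks, x = sizeCost m p c K}

open Finset

section Aux

/-- Fiber of the first projection of a sigma type over `Fin`. -/
def sigmaFstFiberEquiv {k : ℕ} (K : Fin k → ℕ) (i : Fin k) :
    {s : (j : Fin k) × Fin (K j) // s.1 = i} ≃ Fin (K i) where
  toFun s := Fin.cast (congrArg K s.2) s.1.2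
  invFun b := ⟨⟨i, b⟩, rfl⟩
  left_inv := by rintro ⟨⟨j, b⟩, rfl⟩; rfl
  right_inv b := rfl

lemma exists_satisfiesSize {n k : ℕ} {K : Fin k → ℕ} (h : ∑ i, K i = n) :
    ∃ α : Fin n → Fin k, satisfiesSize α K := by
  have hc : Fintype.card ((j : Fin k) × Fin (K j)) = n := by simp [h]
  let e := Fintype.equivFinOfCardEq hc
  refine ⟨fun t => (e.symm t).1, fun i => ?_⟩
  rw [← Fintype.card_subtype]
  rw [Fintype.card_congr ((e.symm.subtypeEquiv fun a => Iff.rfl).trans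
    (sigmaFstFiberEquiv K i))]
  simp

variable {X : Type*} [MetricSpace X] {n k m : ℕ}

lemma sizeCost_bddBelow (p : Fin n → X) (c : Fin k → X) (K : Fin k → ℕ) :
    BddBelow {x | ∃ α : Fin n → Fin k, satisfiesSize α K ∧
      x = ∑ t, dist (p t) (c (α t)) ^ m} := by
  refine ⟨0, ?_⟩
  rintro x ⟨α, -, rfl⟩
  positivity

lemma sizeCost_nonneg (p : Fin n → X) (c : Fin k → X) (K : Fin k → ℕ) :
    0 ≤ sizeCost m p c K := by
  apply Real.sInf_nonneg
  rintro x ⟨α, -, rfl⟩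
  positivity

lemma sizeCost_le (p : Fin n → X) (c : Fin k → X) {K : Fin k → ℕ}
    {α : Fin n → Fin k} (hα : satisfiesSize α K) :
    sizeCost m p c K ≤ ∑ t, dist (p t) (c (α t)) ^ m :=
  csInf_le (sizeCost_bddBelow p c K) ⟨α, hα, rfl⟩

lemma exists_sizeCost_eq (p : Fin n → X) (c : Fin k → X) {K : Fin k → ℕ}
    (h : ∑ i, K i = n) :
    ∃ α : Fin n → Fin k, satisfiesSize α K ∧
      sizeCost m p c K = ∑ t, dist (p t) (c (α t)) ^ m := by
  set S : Set ℝ := {x | ∃ α : Fin n → Fin k, satisfiesSize α K ∧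
    x = ∑ t, dist (p t) (c (α t)) ^ m} with hS
  have hne : S.Nonempty := by
    obtain ⟨α, hα⟩ := exists_satisfiesSize h
    exact ⟨_, α, hα, rfl⟩
  have hfin : S.Finite := by
    apply Set.Finite.subset
      (Set.finite_range fun α : Fin n → Fin k => ∑ t, dist (p t) (c (α t)) ^ m)
    rintro x ⟨α, -, rfl⟩
    exact ⟨α, rfl⟩
  obtain ⟨α, hα, hx⟩ := hne.csInf_mem hfin
  exact ⟨α, hα, hx⟩

lemma sCC_nonneg (p : Fin n → X) (c : Fin k → X) (Ks : Set (Fin k → ℕ)) :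
    0 ≤ sizeConstraintCost m p c Ks := by
  apply Real.sInf_nonneg
  rintro x ⟨K, -, rfl⟩
  exact sizeCost_nonneg p c K

lemma sCC_le (p : Fin n → X) (c : Fin k → X) {Ks : Set (Fin k → ℕ)}
    {K : Fin k → ℕ} (hK : K ∈ Ks) :
    sizeConstraintCost m p c Ks ≤ sizeCost m p c K := by
  refine csInf_le ⟨0, ?_⟩ ⟨K, hK, rfl⟩
  rintro x ⟨K', -, rfl⟩
  exact sizeCost_nonneg p c K'

lemma exists_sCC_eq (p : Fin n → X) (c : Fin k → X) {Ks : Set (Fin k → ℕ)}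
    (hne : Ks.Nonempty) (hsum : ∀ K ∈ Ks, ∑ i, K i = n) :
    ∃ K ∈ Ks, sizeConstraintCost m p c Ks = sizeCost m p c K := by
  have hset : {x | ∃ K ∈ Ks, x = sizeCost m p c K} = (sizeCost m p c) '' Ks := by
    ext x; constructor
    · rintro ⟨K, hK, rfl⟩; exact ⟨K, hK, rfl⟩
    · rintro ⟨K, hK, rfl⟩; exact ⟨K, hK, rfl⟩
  have hKsfin : Ks.Finite := by
    apply Set.Finite.subset (Set.finite_Icc (0 : Fin k → ℕ) fun _ => n)
    intro K hK
    refine ⟨fun i => Nat.zero_le _, fun i => ?_⟩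
    calc K i ≤ ∑ j, K j := Finset.single_le_sum (fun j _ => Nat.zero_le _) (mem_univ i)
    _ = n := hsum K hK
  have hne' : {x | ∃ K ∈ Ks, x = sizeCost m p c K}.Nonempty := by
    obtain ⟨K, hK⟩ := hne
    exact ⟨_, K, hK, rfl⟩
  have hfin : {x | ∃ K ∈ Ks, x = sizeCost m p c K}.Finite := by
    rw [hset]; exact hKsfin.image _
  obtain ⟨K, hK, hx⟩ := hne'.csInf_mem hfin
  exact ⟨K, hK, hx⟩

lemma sCC_singleton (p : Fin n → X) (c : Fin k → X) (K : Fin k → ℕ) :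
    sizeConstraintCost m p c {K} = sizeCost m p c K := by
  have : {x | ∃ K' ∈ ({K} : Set (Fin k → ℕ)), x = sizeCost m p c K'}
      = {sizeCost m p c K} := by
    ext x; simp [eq_comm]
  rw [sizeConstraintCost, this, csInf_singleton]

lemma card_filter_fin_add {n₁ n₂ : ℕ} (P : Fin (n₁ + n₂) → Prop) [DecidablePred P] :
    (univ.filter P).card
      = (univ.filter fun t : Fin n₁ => P (Fin.castAdd n₂ t)).card
        + (univ.filter fun t : Fin n₂ => P (Fin.natAdd n₁ t)).card := by
  simp only [Finset.card_filter]
  exact Fin.sum_univ_add fun i => if P i then 1 else 0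

lemma exists_split {n₁ n₂ k : ℕ} {K : Fin k → ℕ} {α : Fin (n₁ + n₂) → Fin k}
    (hα : satisfiesSize α K) :
    ∃ K₁ K₂ : Fin k → ℕ, (∀ i, K₁ i + K₂ i = K i) ∧ (∑ i, K₁ i = n₁) ∧
      (∑ i, K₂ i = n₂) ∧ satisfiesSize (fun t => α (Fin.castAdd n₂ t)) K₁ ∧
      satisfiesSize (fun t => α (Fin.natAdd n₁ t)) K₂ := by
  refine ⟨fun i => (univ.filter fun t : Fin n₁ => α (Fin.castAdd n₂ t) = i).card,
    fun i => (univ.filter fun t : Fin n₂ => α (Fin.natAdd n₁ t) = i).card,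
    fun i => ?_, ?_, ?_, fun i => rfl, fun i => rfl⟩
  · rw [← hα i, card_filter_fin_add]
  · have := Finset.card_eq_sum_card_fiberwise
      (f := fun t : Fin n₁ => α (Fin.castAdd n₂ t)) (s := univ) (t := univ)
      (fun x _ => mem_univ _)
    simpa using this.symm
  · have := Finset.card_eq_sum_card_fiberwise
      (f := fun t : Fin n₂ => α (Fin.natAdd n₁ t)) (s := univ) (t := univ)
      (fun x _ => mem_univ _)
    simpa using this.symm

lemma satisfiesSize_append {n₁ n₂ k : ℕ} {α₁ : Fin n₁ → Fin k} {α₂ : Fin n₂ → Fin k}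
    {K₁ K₂ K : Fin k → ℕ} (h₁ : satisfiesSize α₁ K₁) (h₂ : satisfiesSize α₂ K₂)
    (hK : ∀ i, K₁ i + K₂ i = K i) :
    satisfiesSize (Fin.append α₁ α₂) K := by
  intro i
  rw [card_filter_fin_add]
  simp only [Fin.append_left, Fin.append_right]
  rw [h₁ i, h₂ i, hK i]

lemma sum_append_split {n₁ n₂ : ℕ} (p₁ : Fin n₁ → X) (p₂ : Fin n₂ → X)
    (c : Fin k → X) (α : Fin (n₁ + n₂) → Fin k) :
    ∑ t, dist (Fin.append p₁ p₂ t) (c (α t)) ^ m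
      = ∑ t, dist (p₁ t) (c (α (Fin.castAdd n₂ t))) ^ m
        + ∑ t, dist (p₂ t) (c (α (Fin.natAdd n₁ t))) ^ m := by
  rw [Fin.sum_univ_add fun t => dist (Fin.append p₁ p₂ t) (c (α t)) ^ m]
  simp [Fin.append_left, Fin.append_right]

lemma sizeCost_append_le {n₁ n₂ : ℕ} (p₁ : Fin n₁ → X) (p₂ : Fin n₂ → X)
    (c : Fin k → X) {K₁ K₂ K : Fin k → ℕ} (hK : ∀ i, K₁ i + K₂ i = K i)
    (hs₁ : ∑ i, K₁ i = n₁) (hs₂ : ∑ i, K₂ i = n₂) :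
    sizeCost m (Fin.append p₁ p₂) c K ≤ sizeCost m p₁ c K₁ + sizeCost m p₂ c K₂ := by
  obtain ⟨β₁, hβ₁, e₁⟩ := exists_sizeCost_eq (m := m) p₁ c hs₁
  obtain ⟨β₂, hβ₂, e₂⟩ := exists_sizeCost_eq (m := m) p₂ c hs₂
  rw [e₁, e₂]
  have hle := sizeCost_le (m := m) (Fin.append p₁ p₂) c
    (satisfiesSize_append hβ₁ hβ₂ hK)
  calc sizeCost m (Fin.append p₁ p₂) c K
      ≤ ∑ t, dist (Fin.append p₁ p₂ t) (c (Fin.append β₁ β₂ t)) ^ m := hle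
    _ = ∑ t, dist (p₁ t) (c (β₁ t)) ^ m + ∑ t, dist (p₂ t) (c (β₂ t)) ^ m := by
        rw [sum_append_split]
        simp [Fin.append_left, Fin.append_right]

end Aux

theorem size_coresets_mergeable {X : Type*} [MetricSpace X] {n₁ n₂ k m : ℕ}
    (hm : 1 ≤ m) (hk : 1 ≤ k) {ε : ℝ} (hε : 0 ≤ ε)
    (p₁ q₁ : Fin n₁ → X) (p₂ q₂ : Fin n₂ → X)
    (h₁ : ∀ c : Fin k → X, ∀ Ks : Set (Fin k → ℕ), Ks.Nonempty →
      (∀ K ∈ Ks, ∑ i, K i = n₁) →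
      |sizeConstraintCost m p₁ c Ks - sizeConstraintCost m q₁ c Ks| ≤
        ε * sizeConstraintCost m p₁ c Ks)
    (h₂ : ∀ c : Fin k → X, ∀ Ks : Set (Fin k → ℕ), Ks.Nonempty →
      (∀ K ∈ Ks, ∑ i, K i = n₂) →
      |sizeConstraintCost m p₂ c Ks - sizeConstraintCost m q₂ c Ks| ≤
        ε * sizeConstraintCost m p₂ c Ks) :
    ∀ c : Fin k → X, ∀ Ks : Set (Fin k → ℕ), Ks.Nonempty →
      (∀ K ∈ Ks, ∑ i, K i = n₁ + n₂) →
      |sizeConstraintCost m (Fin.append p₁ p₂) c Ks -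
          sizeConstraintCost m (Fin.append q₁ q₂) c Ks| ≤
        ε * sizeConstraintCost m (Fin.append p₁ p₂) c Ks := by
  intro c Ks hne hsum
  set P := sizeConstraintCost m (Fin.append p₁ p₂) c Ks with hP
  set Q := sizeConstraintCost m (Fin.append q₁ q₂) c Ks with hQ
  have hP0 : 0 ≤ P := sCC_nonneg _ _ _
  have hQ0 : 0 ≤ Q := sCC_nonneg _ _ _
  -- coreset hypotheses specialized to singletons
  have hcor₁ : ∀ K : Fin k → ℕ, ∑ i, K i = n₁ →
      |sizeCost m p₁ c K - sizeCost m q₁ c K| ≤ ε * sizeCost m p₁ c K := by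
    intro K hs
    have := h₁ c {K} (Set.singleton_nonempty K) (by rintro K' rfl; exact hs)
    rwa [sCC_singleton, sCC_singleton] at this
  have hcor₂ : ∀ K : Fin k → ℕ, ∑ i, K i = n₂ →
      |sizeCost m p₂ c K - sizeCost m q₂ c K| ≤ ε * sizeCost m p₂ c K := by
    intro K hs
    have := h₂ c {K} (Set.singleton_nonempty K) (by rintro K' rfl; exact hs)
    rwa [sCC_singleton, sCC_singleton] at this
  rw [abs_sub_le_iff]
  constructor
  · -- P - Q ≤ ε * P
    rcases le_or_gt 1 ε with h1 | h1
    · have : P - Q ≤ P := by linarith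
      calc P - Q ≤ P := this
        _ = 1 * P := (one_mul P).symm
        _ ≤ ε * P := mul_le_mul_of_nonneg_right h1 hP0
    · -- ε < 1 : show (1 - ε) * P ≤ Q
      obtain ⟨K, hK, hQeq⟩ := exists_sCC_eq (m := m) (Fin.append q₁ q₂) c hne hsum
      obtain ⟨α, hα, hQsum⟩ := exists_sizeCost_eq (m := m) (Fin.append q₁ q₂) c (hsum K hK)
      obtain ⟨K₁, K₂, hKadd, hs₁, hs₂, hα₁, hα₂⟩ := exists_split hα
      have hb₁ : sizeCost m q₁ c K₁ ≤ ∑ t, dist (q₁ t) (c (α (Fin.castAdd n₂ t))) ^ m :=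
        sizeCost_le q₁ c hα₁
      have hb₂ : sizeCost m q₂ c K₂ ≤ ∑ t, dist (q₂ t) (c (α (Fin.natAdd n₁ t))) ^ m :=
        sizeCost_le q₂ c hα₂
      have hQval : Q = ∑ t, dist (q₁ t) (c (α (Fin.castAdd n₂ t))) ^ m
          + ∑ t, dist (q₂ t) (c (α (Fin.natAdd n₁ t))) ^ m := by
        rw [hQ, hQeq, hQsum, sum_append_split]
      have hPle : P ≤ sizeCost m p₁ c K₁ + sizeCost m p₂ c K₂ := by
        calc P ≤ sizeCost m (Fin.append p₁ p₂) c K := sCC_le _ c hK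
          _ ≤ _ := sizeCost_append_le p₁ p₂ c hKadd hs₁ hs₂
      have e₁ := hcor₁ K₁ hs₁
      have e₂ := hcor₂ K₂ hs₂
      rw [abs_sub_le_iff] at e₁ e₂
      have g₁ : (1 - ε) * sizeCost m p₁ c K₁ ≤ sizeCost m q₁ c K₁ := by
        have := e₁.1; ring_nf; ring_nf at this ⊢; nlinarith [sizeCost_nonneg (m := m) p₁ c K₁]
      have g₂ : (1 - ε) * sizeCost m p₂ c K₂ ≤ sizeCost m q₂ c K₂ := by
        have := e₂.1; nlinarith [sizeCost_nonneg (m := m) p₂ c K₂]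
      have key : (1 - ε) * P ≤ Q := by
        have h1ε : (0:ℝ) ≤ 1 - ε := by linarith
        calc (1 - ε) * P ≤ (1 - ε) * (sizeCost m p₁ c K₁ + sizeCost m p₂ c K₂) :=
              mul_le_mul_of_nonneg_left hPle h1ε
          _ = (1 - ε) * sizeCost m p₁ c K₁ + (1 - ε) * sizeCost m p₂ c K₂ := by ring
          _ ≤ sizeCost m q₁ c K₁ + sizeCost m q₂ c K₂ := add_le_add g₁ g₂
          _ ≤ _ + _ := add_le_add hb₁ hb₂
          _ = Q := hQval.symm
      nlinarith [key]
  · -- Q - P ≤ ε * P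
    obtain ⟨K, hK, hPeq⟩ := exists_sCC_eq (m := m) (Fin.append p₁ p₂) c hne hsum
    obtain ⟨α, hα, hPsum⟩ := exists_sizeCost_eq (m := m) (Fin.append p₁ p₂) c (hsum K hK)
    obtain ⟨K₁, K₂, hKadd, hs₁, hs₂, hα₁, hα₂⟩ := exists_split hα
    have ha₁ : sizeCost m p₁ c K₁ ≤ ∑ t, dist (p₁ t) (c (α (Fin.castAdd n₂ t))) ^ m :=
      sizeCost_le p₁ c hα₁
    have ha₂ : sizeCost m p₂ c K₂ ≤ ∑ t, dist (p₂ t) (c (α (Fin.natAdd n₁ t))) ^ m :=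
      sizeCost_le p₂ c hα₂
    have hPval : P = ∑ t, dist (p₁ t) (c (α (Fin.castAdd n₂ t))) ^ m
        + ∑ t, dist (p₂ t) (c (α (Fin.natAdd n₁ t))) ^ m := by
      rw [hP, hPeq, hPsum, sum_append_split]
    have hQle : Q ≤ sizeCost m q₁ c K₁ + sizeCost m q₂ c K₂ := by
      calc Q ≤ sizeCost m (Fin.append q₁ q₂) c K := sCC_le _ c hK
        _ ≤ _ := sizeCost_append_le q₁ q₂ c hKadd hs₁ hs₂
    have e₁ := hcor₁ K₁ hs₁
    have e₂ := hcor₂ K₂ hs₂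
    rw [abs_sub_le_iff] at e₁ e₂
    have g₁ : sizeCost m q₁ c K₁ ≤ (1 + ε) * sizeCost m p₁ c K₁ := by
      have := e₁.2; nlinarith
    have g₂ : sizeCost m q₂ c K₂ ≤ (1 + ε) * sizeCost m p₂ c K₂ := by
      have := e₂.2; nlinarith
    have h1ε : (0:ℝ) ≤ 1 + ε := by linarith
    have key : Q ≤ (1 + ε) * P := by
      calc Q ≤ sizeCost m q₁ c K₁ + sizeCost m q₂ c K₂ := hQle
        _ ≤ (1 + ε) * sizeCost m p₁ c K₁ + (1 + ε) * sizeCost m p₂ c K₂ :=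
            add_le_add g₁ g₂
        _ = (1 + ε) * (sizeCost m p₁ c K₁ + sizeCost m p₂ c K₂) := by ring
        _ ≤ (1 + ε) * (∑ t, dist (p₁ t) (c (α (Fin.castAdd n₂ t))) ^ m
              + ∑ t, dist (p₂ t) (c (α (Fin.natAdd n₁ t))) ^ m) :=
            mul_le_mul_of_nonneg_left (add_le_add ha₁ ha₂) h1ε
        _ = (1 + ε) * P := by rw [hPval]
    nlinarith [key]
end

section
/- Let (X, dist) be a metric space, let m ≥ 1 and k ≥ 1 be integers, let ε ∈ (0,1), and let n ≥ 1. Let p, q : Fin n → X satisfy Σ_{t<n} dist(p t, q t)^m ≤ (ε/(2m))^m · ⨅_{c' : Fin k → X} cost_m(p, c'). For lower bounds ℓ : Fin k → ℕ with Σ_{i<k} ℓ i ≤ n define cost_{m,≥ℓ}(p, c) as the minimum over assignments α : Fin n → Fin k with |α⁻¹(i)| ≥ ℓ i for all i of Σ_{t<n} dist(p t, c (α t))^m, and for upper bounds u : Fin k → ℕ with Σ_{i<k} u i ≥ n define cost_{m,≤u}(p, c) analogously with |α⁻¹(i)| ≤ u i. Then for every c : Fin k → X, every such ℓ, and every such u: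 |cost_{m,≥ℓ}(p, c) − cost_{m,≥ℓ}(q, c)| ≤ ε · cost_{m,≥ℓ}(p, c) and |cost_{m,≤u}(p, c) − cost_{m,≤u}(q, c)| ≤ ε · cost_{m,≤u}(p, c). -/
/-- The lower-bounded clustering cost: minimum over assignments `α` such that
every cluster `i` receives at least `lb i` points. -/
noncomputable def lowerBoundCost {X : Type*} [MetricSpace X] {n k : ℕ} (m : ℕ)
    (p : Fin n → X) (c : Fin k → X) (lb : Fin k → ℕ) : ℝ :=
  sInf {x | ∃ α : Fin n → Fin k,
    (∀ i, lb i ≤ (Finset.univ.filter fun t => α t = i).card) ∧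
    x = ∑ t, dist (p t) (c (α t)) ^ m}

/-- The capacitated clustering cost: minimum over assignments `α` such that
every cluster `i` receives at most `u i` points. -/
noncomputable def upperBoundCost {X : Type*} [MetricSpace X] {n k : ℕ} (m : ℕ)
    (p : Fin n → X) (c : Fin k → X) (u : Fin k → ℕ) : ℝ :=
  sInf {x | ∃ α : Fin n → Fin k,
    (∀ i, (Finset.univ.filter fun t => α t = i).card ≤ u i) ∧
    x = ∑ t, dist (p t) (c (α t)) ^ m}


open Finset

lemma myPowBound {x : ℝ} (hx : 0 ≤ x) (m : ℕ) : (1 + x) ^ m * (1 - m * x) ≤ 1 := by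
  induction m with
  | zero => simp
  | succ m ih =>
      have h1 : (1 + x) * (1 - (m + 1 : ℕ) * x) ≤ 1 - m * x := by
        push_cast
        nlinarith [mul_nonneg (Nat.cast_nonneg (α := ℝ) m) (sq_nonneg x), sq_nonneg x]
      have h2 : (1 + x) ^ (m + 1) * (1 - (m + 1 : ℕ) * x)
          ≤ (1 + x) ^ m * (1 - m * x) := by
        have := mul_le_mul_of_nonneg_left h1 (pow_nonneg (by linarith : (0:ℝ) ≤ 1 + x) m)
        calc (1 + x) ^ (m + 1) * (1 - (m + 1 : ℕ) * x)
            = (1 + x) ^ m * ((1 + x) * (1 - (m + 1 : ℕ) * x)) := by ring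
          _ ≤ (1 + x) ^ m * (1 - m * x) := this
      exact h2.trans ih

lemma myMink {n m : ℕ} (hm : 1 ≤ m) {a d : Fin n → ℝ}
    (ha : ∀ t, 0 ≤ a t) (hd : ∀ t, 0 ≤ d t) :
    (∑ t, (a t + d t) ^ m) ^ ((m : ℝ)⁻¹) ≤
      (∑ t, a t ^ m) ^ ((m : ℝ)⁻¹) + (∑ t, d t ^ m) ^ ((m : ℝ)⁻¹) := by
  have hp : (1 : ℝ) ≤ (m : ℝ) := by exact_mod_cast hm
  have := Real.Lp_add_le_of_nonneg (s := Finset.univ) (f := a) (g := d) (p := (m : ℝ)) hp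
    (fun i _ => ha i) (fun i _ => hd i)
  simpa [Real.rpow_natCast, one_div] using this

lemma myCore {n m : ℕ} (hm : 1 ≤ m) {δ : ℝ} (hδ0 : 0 ≤ δ) (hδ1 : δ ≤ 1)
    {a b d : Fin n → ℝ} (ha : ∀ t, 0 ≤ a t) (hb : ∀ t, 0 ≤ b t) (hd : ∀ t, 0 ≤ d t)
    (hba : ∀ t, b t ≤ a t + d t) (hab : ∀ t, a t ≤ b t + d t)
    (hD : ∑ t, d t ^ m ≤ δ ^ m * ∑ t, a t ^ m) :
    (1 - δ) ^ m * ∑ t, a t ^ m ≤ ∑ t, b t ^ m ∧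
      ∑ t, b t ^ m ≤ (1 + δ) ^ m * ∑ t, a t ^ m := by
  have hm0 : m ≠ 0 := by omega
  set r : ℝ := (m : ℝ)⁻¹ with hr
  have hr0 : 0 ≤ r := by positivity
  have hA0 : 0 ≤ ∑ t, a t ^ m := Finset.sum_nonneg fun t _ => pow_nonneg (ha t) m
  have hB0 : 0 ≤ ∑ t, b t ^ m := Finset.sum_nonneg fun t _ => pow_nonneg (hb t) m
  have hD0 : 0 ≤ ∑ t, d t ^ m := Finset.sum_nonneg fun t _ => pow_nonneg (hd t) m
  have hRA0 : 0 ≤ (∑ t, a t ^ m) ^ r := Real.rpow_nonneg hA0 _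
  have hRD : (∑ t, d t ^ m) ^ r ≤ δ * (∑ t, a t ^ m) ^ r := by
    calc (∑ t, d t ^ m) ^ r ≤ (δ ^ m * ∑ t, a t ^ m) ^ r :=
          Real.rpow_le_rpow hD0 hD hr0
      _ = (δ ^ m) ^ r * (∑ t, a t ^ m) ^ r :=
          Real.mul_rpow (pow_nonneg hδ0 m) hA0
      _ = δ * (∑ t, a t ^ m) ^ r := by
          rw [hr, Real.pow_rpow_inv_natCast hδ0 hm0]
  constructor
  · -- lower bound
    have hAsum : ∑ t, a t ^ m ≤ ∑ t, (b t + d t) ^ m :=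
      Finset.sum_le_sum fun t _ => pow_le_pow_left₀ (ha t) (hab t) m
    have h1 : (∑ t, a t ^ m) ^ r ≤ (∑ t, b t ^ m) ^ r + δ * (∑ t, a t ^ m) ^ r := by
      calc (∑ t, a t ^ m) ^ r ≤ (∑ t, (b t + d t) ^ m) ^ r :=
            Real.rpow_le_rpow hA0 hAsum hr0
        _ ≤ (∑ t, b t ^ m) ^ r + (∑ t, d t ^ m) ^ r := myMink hm hb hd
        _ ≤ (∑ t, b t ^ m) ^ r + δ * (∑ t, a t ^ m) ^ r := by linarith
    have h2 : (1 - δ) * (∑ t, a t ^ m) ^ r ≤ (∑ t, b t ^ m) ^ r := by linarith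
    have h3 := pow_le_pow_left₀ (mul_nonneg (by linarith) hRA0) h2 m
    rwa [mul_pow, Real.rpow_inv_natCast_pow hA0 hm0,
      Real.rpow_inv_natCast_pow hB0 hm0] at h3
  · -- upper bound
    have hBsum : ∑ t, b t ^ m ≤ ∑ t, (a t + d t) ^ m :=
      Finset.sum_le_sum fun t _ => pow_le_pow_left₀ (hb t) (hba t) m
    have h1 : (∑ t, (a t + d t) ^ m) ^ r ≤ (1 + δ) * (∑ t, a t ^ m) ^ r := by
      calc (∑ t, (a t + d t) ^ m) ^ r
          ≤ (∑ t, a t ^ m) ^ r + (∑ t, d t ^ m) ^ r := myMink hm ha hd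
        _ ≤ (1 + δ) * (∑ t, a t ^ m) ^ r := by linarith
    have hS0 : 0 ≤ ∑ t, (a t + d t) ^ m :=
      Finset.sum_nonneg fun t _ => pow_nonneg (add_nonneg (ha t) (hd t)) m
    have h3 := pow_le_pow_left₀ (Real.rpow_nonneg hS0 r) h1 m
    rw [mul_pow, Real.rpow_inv_natCast_pow hA0 hm0,
      Real.rpow_inv_natCast_pow hS0 hm0] at h3
    exact hBsum.trans h3

lemma mySInf {ι : Sort*} {P : ι → Prop} (hne : ∃ α, P α) {ε : ℝ}
    (hε0 : 0 ≤ ε) (hε1 : ε ≤ 1) {f g : ι → ℝ} (hf0 : ∀ α, 0 ≤ f α)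
    (h1 : ∀ α, (1 - ε) * f α ≤ g α) (h2 : ∀ α, g α ≤ (1 + ε) * f α) :
    |sInf {x | ∃ α, P α ∧ x = f α} - sInf {x | ∃ α, P α ∧ x = g α}| ≤
      ε * sInf {x | ∃ α, P α ∧ x = f α} := by
  obtain ⟨α₀, hα₀⟩ := hne
  have hg0 : ∀ α, 0 ≤ g α := fun α =>
    le_trans (mul_nonneg (by linarith) (hf0 α)) (h1 α)
  set Sp := {x | ∃ α, P α ∧ x = f α}
  set Sq := {x | ∃ α, P α ∧ x = g α}
  have hSpne : Sp.Nonempty := ⟨f α₀, α₀, hα₀, rfl⟩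
  have hSqne : Sq.Nonempty := ⟨g α₀, α₀, hα₀, rfl⟩
  have hSpbdd : BddBelow Sp := ⟨0, fun x ⟨α, _, hx⟩ => hx ▸ hf0 α⟩
  have hSqbdd : BddBelow Sq := ⟨0, fun x ⟨α, _, hx⟩ => hx ▸ hg0 α⟩
  have hLp0 : 0 ≤ sInf Sp := le_csInf hSpne fun x ⟨α, _, hx⟩ => hx ▸ hf0 α
  have hlow : (1 - ε) * sInf Sp ≤ sInf Sq := by
    refine le_csInf hSqne ?_
    rintro x ⟨α, hα, rfl⟩
    calc (1 - ε) * sInf Sp ≤ (1 - ε) * f α :=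
          mul_le_mul_of_nonneg_left (csInf_le hSpbdd ⟨α, hα, rfl⟩) (by linarith)
      _ ≤ g α := h1 α
  have hup : sInf Sq ≤ (1 + ε) * sInf Sp := by
    have hpos : (0 : ℝ) < 1 + ε := by linarith
    have : sInf Sq / (1 + ε) ≤ sInf Sp := by
      refine le_csInf hSpne ?_
      rintro x ⟨α, hα, rfl⟩
      rw [div_le_iff₀ hpos]
      calc sInf Sq ≤ g α := csInf_le hSqbdd ⟨α, hα, rfl⟩
        _ ≤ (1 + ε) * f α := h2 α
        _ = f α * (1 + ε) := by ring
    calc sInf Sq = sInf Sq / (1 + ε) * (1 + ε) := by field_simp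
      _ ≤ sInf Sp * (1 + ε) := mul_le_mul_of_nonneg_right this hpos.le
      _ = (1 + ε) * sInf Sp := by ring
  rw [abs_le]
  constructor <;> nlinarith

lemma myExistsLB {k : ℕ} (hk : 1 ≤ k) :
    ∀ n (lb : Fin k → ℕ), ∑ i, lb i ≤ n →
      ∃ α : Fin n → Fin k, ∀ i, lb i ≤ (Finset.univ.filter fun t => α t = i).card := by
  intro n
  induction n with
  | zero =>
      intro lb hlb
      refine ⟨Fin.elim0, fun i => ?_⟩
      have : lb i = 0 := by
        have := Finset.sum_eq_zero_iff.mp (Nat.le_zero.mp hlb) i (Finset.mem_univ i)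
        exact this
      simp [this]
  | succ n ih =>
      intro lb hlb
      by_cases hz : ∀ i, lb i = 0
      · exact ⟨fun _ => ⟨0, hk⟩, fun i => by simp [hz i]⟩
      · push_neg at hz
        obtain ⟨i₀, hi₀⟩ := hz
        have hi₀1 : 1 ≤ lb i₀ := Nat.one_le_iff_ne_zero.mpr hi₀
        set lb' := Function.update lb i₀ (lb i₀ - 1) with hlb'
        have hsum' : ∑ i, lb' i ≤ n := by
          have h1 : ∑ i, lb' i = (lb i₀ - 1) + ∑ i ∈ Finset.univ \ {i₀}, lb i :=
            Finset.sum_update_of_mem (Finset.mem_univ i₀) lb (lb i₀ - 1)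
          have h2 : ∑ i, lb i = lb i₀ + ∑ i ∈ Finset.univ \ {i₀}, lb i := by
            rw [Finset.sdiff_singleton_eq_erase]
            exact (Finset.add_sum_erase _ lb (Finset.mem_univ i₀)).symm
          omega
        obtain ⟨α', hα'⟩ := ih lb' hsum'
        set β : Fin (n+1) → Fin k := Fin.cons i₀ α' with hβ
        refine ⟨β, fun i => ?_⟩
        have hcard : (Finset.univ.filter fun t : Fin (n+1) => β t = i).card =
            (if i₀ = i then 1 else 0) + (Finset.univ.filter fun t : Fin n => α' t = i).card := by
          rw [Finset.card_filter, Finset.card_filter, Fin.sum_univ_succ]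
          simp only [hβ, Fin.cons_zero, Fin.cons_succ]
        rw [hcard]
        rcases eq_or_ne i₀ i with rfl | hne
        · rw [if_pos rfl]
          have h := hα' i₀
          rw [hlb', Function.update_self] at h
          omega
        · rw [if_neg hne]
          have h := hα' i
          rw [hlb', Function.update_of_ne (Ne.symm hne)] at h
          omega

lemma myExistsUB {k : ℕ} :
    ∀ n (u : Fin k → ℕ), n ≤ ∑ i, u i →
      ∃ α : Fin n → Fin k, ∀ i, (Finset.univ.filter fun t => α t = i).card ≤ u i := by
  intro n
  induction n with
  | zero =>
      intro u _
      exact ⟨Fin.elim0, fun i => by simp⟩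
  | succ n ih =>
      intro u hu
      have hz : ∃ i₀, 1 ≤ u i₀ := by
        by_contra h
        push_neg at h
        have : ∑ i, u i = 0 := Finset.sum_eq_zero fun i _ => by have := h i; omega
        omega
      obtain ⟨i₀, hi₀⟩ := hz
      set u' := Function.update u i₀ (u i₀ - 1) with hu'
      have hsum' : n ≤ ∑ i, u' i := by
        have h1 : ∑ i, u' i = (u i₀ - 1) + ∑ i ∈ Finset.univ \ {i₀}, u i :=
          Finset.sum_update_of_mem (Finset.mem_univ i₀) u (u i₀ - 1)
        have h2 : ∑ i, u i = u i₀ + ∑ i ∈ Finset.univ \ {i₀}, u i := by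
          rw [Finset.sdiff_singleton_eq_erase]
          exact (Finset.add_sum_erase _ u (Finset.mem_univ i₀)).symm
        omega
      obtain ⟨α', hα'⟩ := ih u' hsum'
      set β : Fin (n+1) → Fin k := Fin.cons i₀ α' with hβ
      refine ⟨β, fun i => ?_⟩
      have hcard : (Finset.univ.filter fun t : Fin (n+1) => β t = i).card =
          (if i₀ = i then 1 else 0) + (Finset.univ.filter fun t : Fin n => α' t = i).card := by
        rw [Finset.card_filter, Finset.card_filter, Fin.sum_univ_succ]
        simp only [hβ, Fin.cons_zero, Fin.cons_succ]
      rw [hcard]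
      rcases eq_or_ne i₀ i with rfl | hne
      · rw [if_pos rfl]
        have h := hα' i₀
        rw [hu', Function.update_self] at h
        omega
      · rw [if_neg hne]
        have h := hα' i
        rw [hu', Function.update_of_ne (Ne.symm hne)] at h
        omega

theorem movementBased_coreset_for_lower_and_upper_bounds' {X : Type*} [MetricSpace X]
    {n k m : ℕ} (hm : 1 ≤ m) (hk : 1 ≤ k) (hn : 1 ≤ n)
    {ε : ℝ} (hε : ε ∈ Set.Ioo (0 : ℝ) 1)
    (p q : Fin n → X)
    (hmove : ∑ t, dist (p t) (q t) ^ m ≤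
      (ε / (2 * m)) ^ m * ⨅ c' : Fin k → X, (∑ t, (⨅ i, dist (p t) (c' i)) ^ m)) :
    ∀ c : Fin k → X,
      (∀ lb : Fin k → ℕ, ∑ i, lb i ≤ n →
        |sInf {x | ∃ α : Fin n → Fin k,
            (∀ i, lb i ≤ (Finset.univ.filter fun t => α t = i).card) ∧
            x = ∑ t, dist (p t) (c (α t)) ^ m} -
          sInf {x | ∃ α : Fin n → Fin k,
            (∀ i, lb i ≤ (Finset.univ.filter fun t => α t = i).card) ∧
            x = ∑ t, dist (q t) (c (α t)) ^ m}| ≤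
          ε * sInf {x | ∃ α : Fin n → Fin k,
            (∀ i, lb i ≤ (Finset.univ.filter fun t => α t = i).card) ∧
            x = ∑ t, dist (p t) (c (α t)) ^ m}) ∧
      (∀ u : Fin k → ℕ, n ≤ ∑ i, u i →
        |sInf {x | ∃ α : Fin n → Fin k,
            (∀ i, (Finset.univ.filter fun t => α t = i).card ≤ u i) ∧
            x = ∑ t, dist (p t) (c (α t)) ^ m} -
          sInf {x | ∃ α : Fin n → Fin k,
            (∀ i, (Finset.univ.filter fun t => α t = i).card ≤ u i) ∧
            x = ∑ t, dist (q t) (c (α t)) ^ m}| ≤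
          ε * sInf {x | ∃ α : Fin n → Fin k,
            (∀ i, (Finset.univ.filter fun t => α t = i).card ≤ u i) ∧
            x = ∑ t, dist (p t) (c (α t)) ^ m}) := by
  obtain ⟨hε0, hε1⟩ := hε
  intro c
  set δ : ℝ := ε / (2 * m) with hδ
  have hm1 : (1 : ℝ) ≤ (m : ℝ) := by exact_mod_cast hm
  have h2m : (0 : ℝ) < 2 * m := by linarith
  have hδ0 : 0 ≤ δ := by positivity
  have hδ1 : δ ≤ 1 := by
    rw [hδ, div_le_one h2m]; linarith
  have hmδ : (m : ℝ) * δ = ε / 2 := by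
    rw [hδ]; field_simp
  have hup : (1 + δ) ^ m ≤ 1 + ε := by
    have h := myPowBound hδ0 m
    rw [hmδ] at h
    have hpow0 : (0 : ℝ) ≤ (1 + δ) ^ m := pow_nonneg (by linarith) m
    nlinarith
  have hlow : 1 - ε ≤ (1 - δ) ^ m := by
    have h := one_add_mul_le_pow (a := -δ) (by linarith) m
    rw [mul_neg, ← sub_eq_add_neg, hmδ, ← sub_eq_add_neg] at h
    linarith
  have key : ∀ α : Fin n → Fin k,
      (1 - ε) * (∑ t, dist (p t) (c (α t)) ^ m) ≤ ∑ t, dist (q t) (c (α t)) ^ m ∧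
      ∑ t, dist (q t) (c (α t)) ^ m ≤ (1 + ε) * ∑ t, dist (p t) (c (α t)) ^ m := by
    intro α
    have hbdd : ∀ t : Fin n, BddBelow (Set.range fun i => dist (p t) (c i)) :=
      fun t => ⟨0, fun x ⟨i, hi⟩ => hi ▸ dist_nonneg⟩
    have hA0 : 0 ≤ ∑ t, dist (p t) (c (α t)) ^ m :=
      Finset.sum_nonneg fun t _ => pow_nonneg dist_nonneg m
    have hD : ∑ t, dist (p t) (q t) ^ m ≤ δ ^ m * ∑ t, dist (p t) (c (α t)) ^ m := by
      refine hmove.trans (mul_le_mul_of_nonneg_left ?_ (pow_nonneg hδ0 m))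
      have hstep1 : (⨅ c' : Fin k → X, (∑ t, (⨅ i, dist (p t) (c' i)) ^ m)) ≤
          ∑ t, (⨅ i, dist (p t) (c i)) ^ m := by
        refine ciInf_le ⟨0, ?_⟩ c
        rintro x ⟨c', rfl⟩
        exact Finset.sum_nonneg fun t _ =>
          pow_nonneg (Real.iInf_nonneg fun i => dist_nonneg) m
      refine hstep1.trans (Finset.sum_le_sum fun t _ => ?_)
      exact pow_le_pow_left₀ (Real.iInf_nonneg fun i => dist_nonneg)
        (ciInf_le (hbdd t) (α t)) m
    have hcore := myCore (n := n) hm hδ0 hδ1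
      (a := fun t => dist (p t) (c (α t)))
      (b := fun t => dist (q t) (c (α t)))
      (d := fun t => dist (p t) (q t))
      (fun t => dist_nonneg) (fun t => dist_nonneg) (fun t => dist_nonneg)
      (fun t => by
        calc dist (q t) (c (α t)) ≤ dist (q t) (p t) + dist (p t) (c (α t)) :=
              dist_triangle _ _ _
          _ = dist (p t) (c (α t)) + dist (p t) (q t) := by rw [dist_comm (q t) (p t)]; ring)
      (fun t => by
        calc dist (p t) (c (α t)) ≤ dist (p t) (q t) + dist (q t) (c (α t)) :=
              dist_triangle _ _ _
          _ = dist (q t) (c (α t)) + dist (p t) (q t) := by ring)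
      hD
    constructor
    · calc (1 - ε) * ∑ t, dist (p t) (c (α t)) ^ m
          ≤ (1 - δ) ^ m * ∑ t, dist (p t) (c (α t)) ^ m :=
            mul_le_mul_of_nonneg_right hlow hA0
        _ ≤ _ := hcore.1
    · calc ∑ t, dist (q t) (c (α t)) ^ m
          ≤ (1 + δ) ^ m * ∑ t, dist (p t) (c (α t)) ^ m := hcore.2
        _ ≤ (1 + ε) * ∑ t, dist (p t) (c (α t)) ^ m :=
            mul_le_mul_of_nonneg_right hup hA0
  constructor
  · intro lb hlb
    exact mySInf (myExistsLB hk n lb hlb) hε0.le hε1.le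
      (f := fun α => ∑ t, dist (p t) (c (α t)) ^ m)
      (g := fun α => ∑ t, dist (q t) (c (α t)) ^ m)
      (fun α => Finset.sum_nonneg fun t _ => pow_nonneg dist_nonneg m)
      (fun α => (key α).1) (fun α => (key α).2)
  · intro u hu
    exact mySInf (myExistsUB n u hu) hε0.le hε1.le
      (f := fun α => ∑ t, dist (p t) (c (α t)) ^ m)
      (g := fun α => ∑ t, dist (q t) (c (α t)) ^ m)
      (fun α => Finset.sum_nonneg fun t _ => pow_nonneg dist_nonneg m)
      (fun α => (key α).1) (fun α => (key α).2)

theorem movementBased_coreset_for_lower_and_upper_bounds {X : Type*} [MetricSpace X]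
    {n k m : ℕ} (hm : 1 ≤ m) (hk : 1 ≤ k) (hn : 1 ≤ n)
    {ε : ℝ} (hε : ε ∈ Set.Ioo (0 : ℝ) 1)
    (p q : Fin n → X)
    (hmove : ∑ t, dist (p t) (q t) ^ m ≤
      (ε / (2 * m)) ^ m * ⨅ c' : Fin k → X, clusterCost m p c') :
    ∀ c : Fin k → X,
      (∀ lb : Fin k → ℕ, ∑ i, lb i ≤ n →
        |lowerBoundCost m p c lb - lowerBoundCost m q c lb| ≤
          ε * lowerBoundCost m p c lb) ∧
      (∀ u : Fin k → ℕ, n ≤ ∑ i, u i →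
        |upperBoundCost m p c u - upperBoundCost m q c u| ≤
          ε * upperBoundCost m p c u) := by
  intro c
  have h := movementBased_coreset_for_lower_and_upper_bounds' hm hk hn hε p q
    (by unfold clusterCost at hmove; exact hmove) c
  unfold lowerBoundCost upperBoundCost
  exact h
end

section
/- Let (X, dist) be a metric space, m ≥ 1, k ≥ 1, ℓ ≥ 1 integers, and ε ≥ 0. For j ∈ {1,2}, let p_j, q_j : Fin n_j → X be families of points with a common coloring g_j : Fin n_j → Fin ℓ, and suppose that for every c : Fin k → X and every nonempty set 𝐊 of color-constraint matrices with respect to g_j, |cost_{m,𝐊}(p_j, g_j, c) − cost_{m,𝐊}(q_j, g_j, c)| ≤ ε · cost_{m,𝐊}(p_j, g_j, c) (i.e., q_j is a (k, ε)-color coreset for p_j). Let p, q : Fin (n₁+n₂) → X and g : Fin (n₁+n₂) → Fin ℓ be the concatenations (Fin.append) of p₁, p₂, of q₁, q₂, and of g₁, g₂, respectively. Then for every c : Fin k → X and every nonempty set 𝐊 of color-constraint matrices with respect to g, |cost_{m,𝐊}(p, g, c) − cost_{m,𝐊}(q, g, c)| ≤ ε · cost_{m,𝐊}(p, g, c); i.e.,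 color coresets are mergeable. -/
/-- `K` is a color-constraint matrix with respect to the coloring `g`. -/
def IsColorConstraint {n k l : ℕ} (g : Fin n → Fin l) (K : Fin k → Fin l → ℕ) : Prop :=
  ∀ j, ∑ i, K i j = (Finset.univ.filter fun t => g t = j).card

/-- An assignment `α` satisfies the color-constraint matrix `K` if cluster `i`
receives exactly `K i j` points of color `j`. -/
def satisfiesColor {n k l : ℕ} (α : Fin n → Fin k) (g : Fin n → Fin l)
    (K : Fin k → Fin l → ℕ) : Prop :=
  ∀ i j, (Finset.univ.filter fun t => α t = i ∧ g t = j).card = K i j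

/-- The `K`-constrained clustering cost for colored points. -/
noncomputable def colorCost {X : Type*} [MetricSpace X] {n k l : ℕ} (m : ℕ)
    (p : Fin n → X) (g : Fin n → Fin l) (c : Fin k → X)
    (K : Fin k → Fin l → ℕ) : ℝ :=
  sInf {x | ∃ α : Fin n → Fin k, satisfiesColor α g K ∧
    x = ∑ t, dist (p t) (c (α t)) ^ m}

/-- The cost under a color constraint, i.e. a set `Ks` of color-constraint
matrices. -/
noncomputable def colorConstraintCost {X : Type*} [MetricSpace X] {n k l : ℕ} (m : ℕ)
    (p : Fin n → X) (g : Fin n → Fin l) (c : Fin k → X)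
    (Ks : Set (Fin k → Fin l → ℕ)) : ℝ :=
  sInf {x | ∃ K ∈ Ks, x = colorCost m p g c K}

/-!
Cutting an assignment of the concatenated points into its two halves splits its
color-constraint matrix as `K₁ + K₂`, and concatenating assignments satisfying `K₁` and `K₂`
gives one satisfying `K₁ + K₂`. Hence the optimal merged cost under `Ks` is
`cost(p₁, K₁) + cost(p₂, K₂)` for a split with `K₁ + K₂ ∈ Ks`, while any such split bounds the
merged cost from above. Applying the coreset guarantees of the halves to the singletons `{K₁}`
and `{K₂}` of the split optimal for `p` (resp. for `q`) gives the upper (resp. lower) bound.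
-/

open Finset

theorem Fintype.exists_card_fiber_eq {S : Type*} [Fintype S] {k : ℕ} (K : Fin k → ℕ)
    (hS : Fintype.card S = ∑ i, K i) :
    ∃ β : S → Fin k, ∀ i, Fintype.card {s // β s = i} = K i := by
  let e : S ≃ Σ i, Fin (K i) := Fintype.equivOfCardEq (by simp [hS])
  refine ⟨fun s => (e s).1, fun i => ?_⟩
  calc Fintype.card {s // (e s).1 = i}
      = Fintype.card {y : Σ i, Fin (K i) // y.1 = i} :=
        Fintype.card_congr (e.subtypeEquiv fun _ => Iff.rfl)
    _ = K i := by rw [Fintype.card_congr (Equiv.sigmaSubtype i), Fintype.card_fin]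

theorem IsColorConstraint.exists_satisfiesColor {n k l : ℕ} {g : Fin n → Fin l}
    {K : Fin k → Fin l → ℕ} (hK : IsColorConstraint g K) :
    ∃ α : Fin n → Fin k, satisfiesColor α g K := by
  have hfiber : ∀ j, ∃ β : {t // g t = j} → Fin k,
      ∀ i, Fintype.card {s // β s = i} = K i j := fun j =>
    Fintype.exists_card_fiber_eq (K · j) (by rw [Fintype.card_subtype, hK j])
  choose β hβ using hfiber
  refine ⟨fun t => β (g t) ⟨t, rfl⟩, fun i j => ?_⟩
  rw [← Fintype.card_subtype, ← hβ j i]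
  refine Fintype.card_congr ((Equiv.subtypeEquivRight fun t => ?_).trans
    (Equiv.subtypeSubtypeEquivSubtypeExists _ _).symm)
  constructor
  · rintro ⟨hi, rfl⟩
    exact ⟨rfl, hi⟩
  · rintro ⟨rfl, hi⟩
    exact ⟨hi, rfl⟩

section Counts

variable {n n₁ n₂ k l : ℕ}

def colorCount (α : Fin n → Fin k) (g : Fin n → Fin l) : Fin k → Fin l → ℕ :=
  fun i j => #{t | α t = i ∧ g t = j}

theorem satisfiesColor_colorCount (α : Fin n → Fin k) (g : Fin n → Fin l) :
    satisfiesColor α g (colorCount α g) :=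
  fun _ _ => rfl

theorem satisfiesColor.colorCount_eq {α : Fin n → Fin k} {g : Fin n → Fin l}
    {K : Fin k → Fin l → ℕ} (h : satisfiesColor α g K) : colorCount α g = K :=
  funext₂ h

theorem isColorConstraint_colorCount (α : Fin n → Fin k) (g : Fin n → Fin l) :
    IsColorConstraint g (colorCount α g) := fun j => by
  rw [card_eq_sum_card_fiberwise (f := α) (t := univ) fun _ _ => mem_univ _]
  simp only [colorCount, filter_filter, and_comm]

theorem colorCount_append (α₁ : Fin n₁ → Fin k) (α₂ : Fin n₂ → Fin k)
    (g₁ : Fin n₁ → Fin l) (g₂ : Fin n₂ → Fin l) :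
    colorCount (Fin.append α₁ α₂) (Fin.append g₁ g₂) = colorCount α₁ g₁ + colorCount α₂ g₂ := by
  ext i j
  simp only [colorCount, card_filter, Fin.sum_univ_add, Fin.append_left, Fin.append_right,
    Pi.add_apply]

theorem satisfiesColor.append {α₁ : Fin n₁ → Fin k} {α₂ : Fin n₂ → Fin k}
    {g₁ : Fin n₁ → Fin l} {g₂ : Fin n₂ → Fin l} {K₁ K₂ : Fin k → Fin l → ℕ}
    (h₁ : satisfiesColor α₁ g₁ K₁) (h₂ : satisfiesColor α₂ g₂ K₂) :
    satisfiesColor (Fin.append α₁ α₂) (Fin.append g₁ g₂) (K₁ + K₂) := by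
  rw [← h₁.colorCount_eq, ← h₂.colorCount_eq, ← colorCount_append]
  exact satisfiesColor_colorCount _ _

end Counts

section Cost

variable {X : Type*} [MetricSpace X] {n k l m : ℕ} {p : Fin n → X} {g : Fin n → Fin l}
  {c : Fin k → X} {K : Fin k → Fin l → ℕ} {Ks : Set (Fin k → Fin l → ℕ)}

theorem colorCost_nonneg : 0 ≤ colorCost m p g c K :=
  Real.sInf_nonneg <| by
    rintro _ ⟨α, -, rfl⟩
    positivity

theorem colorCost_le {α : Fin n → Fin k} (hα : satisfiesColor α g K) :
    colorCost m p g c K ≤ ∑ t, dist (p t) (c (α t)) ^ m :=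
  csInf_le ⟨0, by rintro _ ⟨α, -, rfl⟩; positivity⟩ ⟨α, hα, rfl⟩

theorem IsColorConstraint.exists_colorCost_eq (hK : IsColorConstraint g K) :
    ∃ α : Fin n → Fin k, satisfiesColor α g K ∧
      colorCost m p g c K = ∑ t, dist (p t) (c (α t)) ^ m := by
  have hfin : {x | ∃ α : Fin n → Fin k, satisfiesColor α g K ∧
      x = ∑ t, dist (p t) (c (α t)) ^ m}.Finite := by
    refine (Set.finite_range fun α : Fin n → Fin k => ∑ t, dist (p t) (c (α t)) ^ m).subset ?_
    rintro _ ⟨α, -, rfl⟩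
    exact ⟨α, rfl⟩
  obtain ⟨α, hα⟩ := hK.exists_satisfiesColor
  refine Set.Nonempty.csInf_mem ?_ hfin
  exact ⟨_, α, hα, rfl⟩

theorem colorConstraintCost_nonneg : 0 ≤ colorConstraintCost m p g c Ks :=
  Real.sInf_nonneg <| by
    rintro _ ⟨K, -, rfl⟩
    exact colorCost_nonneg

theorem colorConstraintCost_le (hK : K ∈ Ks) :
    colorConstraintCost m p g c Ks ≤ colorCost m p g c K :=
  csInf_le ⟨0, by rintro _ ⟨K, -, rfl⟩; exact colorCost_nonneg⟩ ⟨K, hK, rfl⟩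

theorem exists_colorConstraintCost_eq (hKs : Ks.Nonempty)
    (hall : ∀ K ∈ Ks, IsColorConstraint g K) :
    ∃ K ∈ Ks, colorConstraintCost m p g c Ks = colorCost m p g c K := by
  have hfin : {x | ∃ K ∈ Ks, x = colorCost m p g c K}.Finite := by
    refine (Set.finite_range fun α : Fin n → Fin k => ∑ t, dist (p t) (c (α t)) ^ m).subset ?_
    rintro _ ⟨K, hK, rfl⟩
    obtain ⟨α, -, hα⟩ := (hall K hK).exists_colorCost_eq (m := m) (p := p) (c := c)
    exact ⟨α, hα.symm⟩
  obtain ⟨K₀, hK₀⟩ := hKs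
  refine Set.Nonempty.csInf_mem ?_ hfin
  exact ⟨_, K₀, hK₀, rfl⟩

theorem colorConstraintCost_singleton :
    colorConstraintCost m p g c {K} = colorCost m p g c K := by
  simp [colorConstraintCost]

end Cost

section Append

variable {X : Type*} [MetricSpace X] {n₁ n₂ k l m : ℕ} {p₁ : Fin n₁ → X} {p₂ : Fin n₂ → X}
  {g₁ : Fin n₁ → Fin l} {g₂ : Fin n₂ → Fin l} {c : Fin k → X}

theorem sum_dist_append (α₁ : Fin n₁ → Fin k) (α₂ : Fin n₂ → Fin k) :
    ∑ t, dist (Fin.append p₁ p₂ t) (c (Fin.append α₁ α₂ t)) ^ m =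
      ∑ t, dist (p₁ t) (c (α₁ t)) ^ m + ∑ t, dist (p₂ t) (c (α₂ t)) ^ m := by
  simp only [Fin.sum_univ_add, Fin.append_left, Fin.append_right]

theorem colorCost_append_le {K₁ K₂ : Fin k → Fin l → ℕ} (hK₁ : IsColorConstraint g₁ K₁)
    (hK₂ : IsColorConstraint g₂ K₂) :
    colorCost m (Fin.append p₁ p₂) (Fin.append g₁ g₂) c (K₁ + K₂) ≤
      colorCost m p₁ g₁ c K₁ + colorCost m p₂ g₂ c K₂ := by
  obtain ⟨α₁, hα₁, h₁⟩ := hK₁.exists_colorCost_eq (m := m) (p := p₁) (c := c)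
  obtain ⟨α₂, hα₂, h₂⟩ := hK₂.exists_colorCost_eq (m := m) (p := p₂) (c := c)
  rw [h₁, h₂, ← sum_dist_append]
  exact colorCost_le (hα₁.append hα₂)

theorem IsColorConstraint.exists_add_le_colorCost_append {K : Fin k → Fin l → ℕ}
    (hK : IsColorConstraint (Fin.append g₁ g₂) K) :
    ∃ K₁ K₂, IsColorConstraint g₁ K₁ ∧ IsColorConstraint g₂ K₂ ∧ K = K₁ + K₂ ∧
      colorCost m p₁ g₁ c K₁ + colorCost m p₂ g₂ c K₂ ≤
        colorCost m (Fin.append p₁ p₂) (Fin.append g₁ g₂) c K := by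
  obtain ⟨α, hα, hcost⟩ := hK.exists_colorCost_eq (m := m) (p := Fin.append p₁ p₂) (c := c)
  set α₁ := α ∘ Fin.castAdd n₂
  set α₂ := α ∘ Fin.natAdd n₁
  have hsplit : Fin.append α₁ α₂ = α := Fin.append_castAdd_natAdd
  refine ⟨colorCount α₁ g₁, colorCount α₂ g₂, isColorConstraint_colorCount _ _,
    isColorConstraint_colorCount _ _, ?_, ?_⟩
  · rw [← colorCount_append, hsplit, hα.colorCount_eq]
  · rw [hcost, ← hsplit, sum_dist_append]
    exact add_le_add (colorCost_le (satisfiesColor_colorCount _ _))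
      (colorCost_le (satisfiesColor_colorCount _ _))

theorem colorConstraintCost_append_le {Ks : Set (Fin k → Fin l → ℕ)} {K₁ K₂ : Fin k → Fin l → ℕ}
    (hK₁ : IsColorConstraint g₁ K₁) (hK₂ : IsColorConstraint g₂ K₂) (hK : K₁ + K₂ ∈ Ks) :
    colorConstraintCost m (Fin.append p₁ p₂) (Fin.append g₁ g₂) c Ks ≤
      colorCost m p₁ g₁ c K₁ + colorCost m p₂ g₂ c K₂ :=
  (colorConstraintCost_le hK).trans (colorCost_append_le hK₁ hK₂)

theorem exists_colorConstraintCost_append_eq {Ks : Set (Fin k → Fin l → ℕ)}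
    (hKs : Ks.Nonempty) (hall : ∀ K ∈ Ks, IsColorConstraint (Fin.append g₁ g₂) K) :
    ∃ K₁ K₂, IsColorConstraint g₁ K₁ ∧ IsColorConstraint g₂ K₂ ∧ K₁ + K₂ ∈ Ks ∧
      colorConstraintCost m (Fin.append p₁ p₂) (Fin.append g₁ g₂) c Ks =
        colorCost m p₁ g₁ c K₁ + colorCost m p₂ g₂ c K₂ := by
  obtain ⟨K, hK, hmin⟩ := exists_colorConstraintCost_eq (m := m) (p := Fin.append p₁ p₂)
    (c := c) hKs hall
  obtain ⟨K₁, K₂, hK₁, hK₂, rfl, hle⟩ := (hall K hK).exists_add_le_colorCost_append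
    (m := m) (p₁ := p₁) (p₂ := p₂) (c := c)
  exact ⟨K₁, K₂, hK₁, hK₂, hK,
    le_antisymm (colorConstraintCost_append_le hK₁ hK₂ hK) (hmin ▸ hle)⟩

end Append

theorem color_coresets_mergeable_general {X : Type*} [MetricSpace X] {n₁ n₂ k l m : ℕ}
    {ε : ℝ}
    (p₁ q₁ : Fin n₁ → X) (g₁ : Fin n₁ → Fin l)
    (p₂ q₂ : Fin n₂ → X) (g₂ : Fin n₂ → Fin l)
    (h₁ : ∀ c : Fin k → X, ∀ Ks : Set (Fin k → Fin l → ℕ), Ks.Nonempty →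
      (∀ K ∈ Ks, IsColorConstraint g₁ K) →
      |colorConstraintCost m p₁ g₁ c Ks - colorConstraintCost m q₁ g₁ c Ks| ≤
        ε * colorConstraintCost m p₁ g₁ c Ks)
    (h₂ : ∀ c : Fin k → X, ∀ Ks : Set (Fin k → Fin l → ℕ), Ks.Nonempty →
      (∀ K ∈ Ks, IsColorConstraint g₂ K) →
      |colorConstraintCost m p₂ g₂ c Ks - colorConstraintCost m q₂ g₂ c Ks| ≤
        ε * colorConstraintCost m p₂ g₂ c Ks) :
    ∀ c : Fin k → X, ∀ Ks : Set (Fin k → Fin l → ℕ), Ks.Nonempty →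
      (∀ K ∈ Ks, IsColorConstraint (Fin.append g₁ g₂) K) →
      |colorConstraintCost m (Fin.append p₁ p₂) (Fin.append g₁ g₂) c Ks -
          colorConstraintCost m (Fin.append q₁ q₂) (Fin.append g₁ g₂) c Ks| ≤
        ε * colorConstraintCost m (Fin.append p₁ p₂) (Fin.append g₁ g₂) c Ks := by
  intro c Ks hKs hall
  have hcore₁ : ∀ K, IsColorConstraint g₁ K →
      |colorCost m p₁ g₁ c K - colorCost m q₁ g₁ c K| ≤ ε * colorCost m p₁ g₁ c K :=
    fun K hK => by
      simpa only [colorConstraintCost_singleton] using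
        h₁ c {K} (Set.singleton_nonempty K) (by simpa)
  have hcore₂ : ∀ K, IsColorConstraint g₂ K →
      |colorCost m p₂ g₂ c K - colorCost m q₂ g₂ c K| ≤ ε * colorCost m p₂ g₂ c K :=
    fun K hK => by
      simpa only [colorConstraintCost_singleton] using
        h₂ c {K} (Set.singleton_nonempty K) (by simpa)
  rw [abs_sub_le_iff]
  constructor
  · obtain ⟨K₁, K₂, hK₁, hK₂, hK, hq⟩ :=
      exists_colorConstraintCost_append_eq (m := m) (p₁ := q₁) (p₂ := q₂) (c := c) hKs hall
    have hp := colorConstraintCost_append_le (m := m) (p₁ := p₁) (p₂ := p₂) (c := c) hK₁ hK₂ hK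
    have e₁ := (abs_le.mp (hcore₁ K₁ hK₁)).2
    have e₂ := (abs_le.mp (hcore₂ K₂ hK₂)).2
    rcases le_or_gt ε 1 with hε | hε
    · linarith [mul_le_mul_of_nonneg_left hp (sub_nonneg.mpr hε)]
    · have hp₀ : 0 ≤ colorConstraintCost m (Fin.append p₁ p₂) (Fin.append g₁ g₂) c Ks :=
        colorConstraintCost_nonneg
      have hq₀ : 0 ≤ colorConstraintCost m (Fin.append q₁ q₂) (Fin.append g₁ g₂) c Ks :=
        colorConstraintCost_nonneg
      linarith [mul_le_mul_of_nonneg_right hε.le hp₀]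
  · obtain ⟨K₁, K₂, hK₁, hK₂, hK, hp⟩ :=
      exists_colorConstraintCost_append_eq (m := m) (p₁ := p₁) (p₂ := p₂) (c := c) hKs hall
    have hq := colorConstraintCost_append_le (m := m) (p₁ := q₁) (p₂ := q₂) (c := c) hK₁ hK₂ hK
    have e₁ := (abs_le.mp (hcore₁ K₁ hK₁)).1
    have e₂ := (abs_le.mp (hcore₂ K₂ hK₂)).1
    rw [hp]
    linarith

theorem color_coresets_mergeable {X : Type*} [MetricSpace X] {n₁ n₂ k l m : ℕ}
    (hm : 1 ≤ m) (hk : 1 ≤ k) (hl : 1 ≤ l) {ε : ℝ} (hε : 0 ≤ ε)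
    (p₁ q₁ : Fin n₁ → X) (g₁ : Fin n₁ → Fin l)
    (p₂ q₂ : Fin n₂ → X) (g₂ : Fin n₂ → Fin l)
    (h₁ : ∀ c : Fin k → X, ∀ Ks : Set (Fin k → Fin l → ℕ), Ks.Nonempty →
      (∀ K ∈ Ks, IsColorConstraint g₁ K) →
      |colorConstraintCost m p₁ g₁ c Ks - colorConstraintCost m q₁ g₁ c Ks| ≤
        ε * colorConstraintCost m p₁ g₁ c Ks)
    (h₂ : ∀ c : Fin k → X, ∀ Ks : Set (Fin k → Fin l → ℕ), Ks.Nonempty →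
      (∀ K ∈ Ks, IsColorConstraint g₂ K) →
      |colorConstraintCost m p₂ g₂ c Ks - colorConstraintCost m q₂ g₂ c Ks| ≤
        ε * colorConstraintCost m p₂ g₂ c Ks) :
    ∀ c : Fin k → X, ∀ Ks : Set (Fin k → Fin l → ℕ), Ks.Nonempty →
      (∀ K ∈ Ks, IsColorConstraint (Fin.append g₁ g₂) K) →
      |colorConstraintCost m (Fin.append p₁ p₂) (Fin.append g₁ g₂) c Ks -
          colorConstraintCost m (Fin.append q₁ q₂) (Fin.append g₁ g₂) c Ks| ≤
        ε * colorConstraintCost m (Fin.append p₁ p₂) (Fin.append g₁ g₂) c Ks :=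
  color_coresets_mergeable_general p₁ q₁ g₁ p₂ q₂ g₂ h₁ h₂
end

section
/- (Weighted Inaba Lemma.) With the sampling setup below, assume V > 0. Then for every real δ with 0 < δ ≤ 1, ℙ({r : Fin m → ι | Σ_i (w i : ℝ) · ‖s i − μ(r)‖² < (1 + 1/(δ · m)) · V}) ≥ 1 − δ. -/
/-! Relative to any point `a`, the weighted sum of squared distances exceeds `V` by exactly
`W‖a - μ_w‖²`. For the sample mean, `μ(r) - μ_w` is the average of `m` independent vectors
centred under `f`, so the cross terms vanish in expectation and `E[W‖μ(r) - μ_w‖²] = V / m`.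
Markov's inequality then bounds the probability that this excess reaches `V / (δ m)` by `δ`. -/

/-- The total weight `W = Σ_i w i`. -/
noncomputable def totalWeight {ι : Type*} [Fintype ι] (w : ι → ℕ) : ℝ :=
  ∑ i, (w i : ℝ)

/-- The weighted mean `μ_w = (1/W) · Σ_i w i • s i`. -/
noncomputable def weightedMean {d : ℕ} {ι : Type*} [Fintype ι]
    (s : ι → EuclideanSpace ℝ (Fin d)) (w : ι → ℕ) : EuclideanSpace ℝ (Fin d) :=
  (1 / totalWeight w) • ∑ i, (w i : ℝ) • s i

/-- The total weighted squared distance to the weighted mean,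
`V = Σ_i w i · ‖s i − μ_w‖²`. -/
noncomputable def weightedVar {d : ℕ} {ι : Type*} [Fintype ι]
    (s : ι → EuclideanSpace ℝ (Fin d)) (w : ι → ℕ) : ℝ :=
  ∑ i, (w i : ℝ) * ‖s i - weightedMean s w‖ ^ 2

/-- The probability mass function `f(i) = w i / W`. -/
noncomputable def pmfWeight {ι : Type*} [Fintype ι] (w : ι → ℕ) (i : ι) : ℝ :=
  (w i : ℝ) / totalWeight w

/-- The product probability mass on `Fin m → ι` under which the `m` coordinates
are independent samples distributed according to `pmfWeight w`. -/
noncomputable def prodProb {ι : Type*} [Fintype ι] (w : ι → ℕ) {m : ℕ}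
    (r : Fin m → ι) : ℝ :=
  ∏ j, pmfWeight w (r j)

/-- The sample mean `μ(r) = (1/m) · Σ_j s (r j)`. -/
noncomputable def sampleMean {d : ℕ} {ι : Type*} {m : ℕ}
    (s : ι → EuclideanSpace ℝ (Fin d)) (r : Fin m → ι) : EuclideanSpace ℝ (Fin d) :=
  (1 / (m : ℝ)) • ∑ j, s (r j)

open Finset
open scoped RealInnerProductSpace

section InnerProductSpace

variable {ι E : Type*} [Fintype ι] [NormedAddCommGroup E] [InnerProductSpace ℝ E]

theorem sum_mul_inner_eq_zero {c : ι → ℝ} {x : ι → E} (hx : ∑ i, c i • x i = 0) (y : E) :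
    ∑ i, c i * ⟪x i, y⟫ = 0 := by
  simp_rw [← real_inner_smul_left, ← sum_inner, hx, inner_zero_left]

theorem sum_mul_norm_sub_sq_eq_add {c : ι → ℝ} {s : ι → E} {μ : E}
    (hμ : ∑ i, c i • (s i - μ) = 0) (a : E) :
    ∑ i, c i * ‖s i - a‖ ^ 2 = ∑ i, c i * ‖s i - μ‖ ^ 2 + (∑ i, c i) * ‖a - μ‖ ^ 2 := by
  have cross := sum_mul_inner_eq_zero hμ (a - μ)
  calc ∑ i, c i * ‖s i - a‖ ^ 2
      = ∑ i, (c i * ‖s i - μ‖ ^ 2 - 2 * (c i * ⟪s i - μ, a - μ⟫) + c i * ‖a - μ‖ ^ 2) := by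
        refine sum_congr rfl fun i _ => ?_
        rw [← sub_sub_sub_cancel_right (s i) a μ, norm_sub_sq_real]
        ring
    _ = _ := by rw [sum_add_distrib, sum_sub_distrib, ← mul_sum, cross, ← sum_mul]; ring

theorem sum_prod_eq_one {f : ι → ℝ} (hf : ∑ i, f i = 1) (m : ℕ) :
    ∑ r : Fin m → ι, ∏ j, f (r j) = 1 := by
  rw [← Fintype.prod_sum]
  simp [hf]

theorem Fin.sum_univ_pi_cons {M : Type*} [AddCommMonoid M] {m : ℕ}
    (F : (Fin (m + 1) → ι) → M) :
    ∑ r, F r = ∑ a, ∑ q : Fin m → ι, F (Fin.cons a q) := by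
  rw [← (Fin.consEquiv fun _ => ι).sum_comp, Fintype.sum_prod_type]
  rfl

/-- The second moment of a sum of `m` i.i.d. centred vectors is `m` times that of one of them. -/
theorem sum_prod_mul_norm_sum_sq {f : ι → ℝ} {t : ι → E} (hf : ∑ i, f i = 1)
    (ht : ∑ i, f i • t i = 0) :
    ∀ m : ℕ, ∑ r : Fin m → ι, (∏ j, f (r j)) * ‖∑ j, t (r j)‖ ^ 2 =
      m * ∑ i, f i * ‖t i‖ ^ 2
  | 0 => by simp
  | m + 1 => by
    have ih := sum_prod_mul_norm_sum_sq hf ht m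
    simp only [Fin.sum_univ_pi_cons, Fin.prod_univ_succ, Fin.sum_univ_succ, Fin.cons_zero,
      Fin.cons_succ, norm_add_sq_real, mul_add, sum_add_distrib]
    have head : ∑ a, ∑ q : Fin m → ι, (f a * ∏ j, f (q j)) * ‖t a‖ ^ 2 =
        ∑ a, f a * ‖t a‖ ^ 2 := by
      simp_rw [mul_right_comm (f _), ← mul_sum, sum_prod_eq_one hf, mul_one]
    have cross : ∑ a, ∑ q : Fin m → ι, (f a * ∏ j, f (q j)) * (2 * ⟪t a, ∑ j, t (q j)⟫) = 0 := by
      rw [sum_comm]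
      refine sum_eq_zero fun q _ => ?_
      calc _ = (2 * ∏ j, f (q j)) * ∑ a, f a * ⟪t a, ∑ j, t (q j)⟫ := by
            rw [mul_sum]
            exact sum_congr rfl fun a _ => by ring
        _ = 0 := by rw [sum_mul_inner_eq_zero ht, mul_zero]
    have tail : ∑ a, ∑ q : Fin m → ι, (f a * ∏ j, f (q j)) * ‖∑ j, t (q j)‖ ^ 2 =
        m * ∑ i, f i * ‖t i‖ ^ 2 := by
      simp_rw [mul_assoc, ← mul_sum, ih, ← sum_mul, hf, one_mul]
    rw [head, cross, tail]
    push_cast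
    ring

end InnerProductSpace

theorem one_sub_le_sum_filter_lt {Ω : Type*} [Fintype Ω] {p X : Ω → ℝ} {ε δ : ℝ}
    (hp : ∀ r, 0 ≤ p r) (hp_sum : ∑ r, p r = 1) (hX : ∀ r, 0 ≤ X r) (hε : 0 < ε)
    (hmean : ∑ r, p r * X r ≤ δ * ε) :
    1 - δ ≤ ∑ r ∈ univ.filter (fun r => X r < ε), p r := by
  have markov : (∑ r ∈ univ.filter (fun r => ¬X r < ε), p r) * ε ≤ δ * ε :=
    calc (∑ r ∈ univ.filter (fun r => ¬X r < ε), p r) * ε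
        = ∑ r ∈ univ.filter (fun r => ¬X r < ε), p r * ε := sum_mul _ _ _
      _ ≤ ∑ r ∈ univ.filter (fun r => ¬X r < ε), p r * X r :=
        sum_le_sum fun r hr => mul_le_mul_of_nonneg_left (not_lt.mp (mem_filter.mp hr).2) (hp r)
      _ ≤ ∑ r, p r * X r :=
        sum_le_sum_of_subset_of_nonneg (filter_subset _ _) fun r _ _ => mul_nonneg (hp r) (hX r)
      _ ≤ δ * ε := hmean
  have split := sum_filter_add_sum_filter_not univ (fun r => X r < ε) p
  linarith [le_of_mul_le_mul_right markov hε]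

section WeightedSample

variable {d : ℕ} {ι : Type*} (s : ι → EuclideanSpace ℝ (Fin d))

theorem sampleMean_sub {m : ℕ} (hm : m ≠ 0) (r : Fin m → ι) (a : EuclideanSpace ℝ (Fin d)) :
    sampleMean s r - a = (m : ℝ)⁻¹ • ∑ j, (s (r j) - a) := by
  rw [sum_sub_distrib, sum_const, card_univ, Fintype.card_fin, smul_sub,
    ← Nat.cast_smul_eq_nsmul ℝ, smul_smul, inv_mul_cancel₀ (Nat.cast_ne_zero.mpr hm), one_smul,
    sampleMean, one_div]

variable [Fintype ι] (w : ι → ℕ)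

theorem totalWeight_pos_of_weightedVar_pos (hV : 0 < weightedVar s w) : 0 < totalWeight w := by
  refine (sum_nonneg fun i _ => Nat.cast_nonneg (w i)).lt_of_ne fun hW => hV.ne' ?_
  have hw : ∀ i, (w i : ℝ) = 0 := fun i =>
    (sum_eq_zero_iff_of_nonneg fun i _ => Nat.cast_nonneg (w i)).mp hW.symm i (mem_univ i)
  simp [weightedVar, hw]

variable {w}

theorem sum_smul_sub_weightedMean (hW : totalWeight w ≠ 0) :
    ∑ i, (w i : ℝ) • (s i - weightedMean s w) = 0 := by
  rw [sum_congr rfl fun i _ => smul_sub _ _ _, sum_sub_distrib, ← sum_smul, weightedMean,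
    smul_smul, ← totalWeight, mul_one_div_cancel hW, one_smul, sub_self]

theorem sum_pmfWeight (hW : totalWeight w ≠ 0) : ∑ i, pmfWeight w i = 1 := by
  simp_rw [pmfWeight, ← sum_div]
  exact div_self hW

theorem sum_prodProb (hW : totalWeight w ≠ 0) (m : ℕ) : ∑ r : Fin m → ι, prodProb w r = 1 :=
  sum_prod_eq_one (sum_pmfWeight hW) m

theorem prodProb_nonneg {m : ℕ} (r : Fin m → ι) : 0 ≤ prodProb w r :=
  prod_nonneg fun _ _ => div_nonneg (Nat.cast_nonneg _) (sum_nonneg fun _ _ => Nat.cast_nonneg _)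

theorem sum_prodProb_mul_norm_sampleMean_sub_sq (hW : totalWeight w ≠ 0) {m : ℕ} (hm : m ≠ 0) :
    ∑ r : Fin m → ι, prodProb w r * ‖sampleMean s r - weightedMean s w‖ ^ 2 =
      weightedVar s w / (totalWeight w * m) := by
  have hcentred : ∑ i, pmfWeight w i • (s i - weightedMean s w) = 0 := by
    simp_rw [pmfWeight, div_eq_inv_mul, ← smul_smul, ← smul_sum, sum_smul_sub_weightedMean s hW,
      smul_zero]
  have hvar : ∑ i, pmfWeight w i * ‖s i - weightedMean s w‖ ^ 2 =
      weightedVar s w / totalWeight w := by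
    simp_rw [pmfWeight, div_mul_eq_mul_div, ← sum_div]
    rfl
  have moment := sum_prod_mul_norm_sum_sq (sum_pmfWeight hW) hcentred m
  simp_rw [sampleMean_sub s hm, norm_smul, mul_pow, mul_left_comm (prodProb w _), ← mul_sum,
    prodProb]
  rw [moment, hvar, norm_inv, Real.norm_natCast]
  field_simp

end WeightedSample

open scoped Classical in
theorem weighted_inaba_general {d : ℕ} {ι : Type*} [Fintype ι]
    (s : ι → EuclideanSpace ℝ (Fin d)) (w : ι → ℕ)
    {m : ℕ} (hm : 1 ≤ m) (hV : 0 < weightedVar s w)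
    {δ : ℝ} (hδ : δ ∈ Set.Ioc (0 : ℝ) 1) :
    1 - δ ≤
      ∑ r ∈ Finset.univ.filter (fun r : Fin m → ι =>
          ∑ i, (w i : ℝ) * ‖s i - sampleMean s r‖ ^ 2 <
            (1 + 1 / (δ * m)) * weightedVar s w),
        prodProb w r := by
  obtain ⟨hδ, -⟩ := hδ
  have hW := totalWeight_pos_of_weightedVar_pos s w hV
  have hδm : 0 < δ * m := mul_pos hδ (Nat.cast_pos.mpr hm)
  have hexcess : ∀ r : Fin m → ι,
      ∑ i, (w i : ℝ) * ‖s i - sampleMean s r‖ ^ 2 =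
        weightedVar s w + totalWeight w * ‖sampleMean s r - weightedMean s w‖ ^ 2 :=
    fun r => sum_mul_norm_sub_sq_eq_add (sum_smul_sub_weightedMean s hW.ne') _
  have hgood : ∀ r ∈ (univ : Finset (Fin m → ι)),
      ∑ i, (w i : ℝ) * ‖s i - sampleMean s r‖ ^ 2 < (1 + 1 / (δ * m)) * weightedVar s w ↔
        totalWeight w * ‖sampleMean s r - weightedMean s w‖ ^ 2 < weightedVar s w / (δ * m) := by
    intro r _
    rw [hexcess, one_add_mul, one_div_mul_eq_div, add_lt_add_iff_left]
  rw [filter_congr hgood]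
  refine one_sub_le_sum_filter_lt prodProb_nonneg (sum_prodProb hW.ne' m)
    (fun r => by positivity) (div_pos hV hδm) (le_of_eq ?_)
  simp_rw [mul_left_comm (prodProb w _)]
  rw [← mul_sum, sum_prodProb_mul_norm_sampleMean_sub_sq s hW.ne' (by omega)]
  field_simp [hδ.ne']

open scoped Classical in
/-- Weighted Inaba Lemma. -/
theorem weighted_inaba {d : ℕ} {ι : Type*} [Fintype ι] [Nonempty ι]
    (s : ι → EuclideanSpace ℝ (Fin d)) (w : ι → ℕ) (hw : ∀ i, 1 ≤ w i)
    {m : ℕ} (hm : 1 ≤ m) (hV : 0 < weightedVar s w)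
    {δ : ℝ} (hδ : δ ∈ Set.Ioc (0 : ℝ) 1) :
    1 - δ ≤
      ∑ r ∈ Finset.univ.filter (fun r : Fin m → ι =>
          ∑ i, (w i : ℝ) * ‖s i - sampleMean s r‖ ^ 2 <
            (1 + 1 / (δ * m)) * weightedVar s w),
        prodProb w r :=
  weighted_inaba_general s w hm hV hδ
end
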